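/- arXiv:1510.01952 — 8 statements merged into one kernel-verified Lean document; each statement's English description precedes it below -/
import Mathlib

section
/- For every integer n ≥ 1, the number of UD-equivalence classes of ballot paths of length n equals f_{n+1}, the (n+1)-st Fibonacci number. -/
/-- A path is a list of steps: `true` is an up-step U, `false` is a down-step D. -/
abbrev Step := Bool

/-- The height of the `j`-th lattice point of the path `p`. -/
def pathHeight (p : List Bool) (j : ℕ) : ℤ :=
  ((p.take j).count true : ℤ) - ((p.take j).count false : ℤ)

/-- A ballot path: every prefix has at least as many U's as D's. -/
def IsBallot (p : List Bool) : Prop :=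
  ∀ k : ℕ, (p.take k).count false ≤ (p.take k).count true

/-- A Dyck path: a ballot path with equally many U's and D's. -/
def IsDyck (p : List Bool) : Prop :=
  IsBallot p ∧ p.count true = p.count false

/-- The string `τ` occurs at (0-indexed) position `i` of the path `p`. -/
def OccursAt (τ p : List Bool) (i : ℕ) : Prop :=
  (p.drop i).take τ.length = τ

/-- Two paths are `τ`-equivalent: same length and occurrences of `τ` at the same positions. -/
def PathEquiv (τ p q : List Bool) : Prop :=
  p.length = q.length ∧ ∀ i : ℕ, OccursAt τ p i ↔ OccursAt τ q i

/-- The setoid of `τ`-equivalence on ballot paths of length `n`. -/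
def ballotSetoid (τ : List Bool) (n : ℕ) :
    Setoid {p : List Bool // IsBallot p ∧ p.length = n} where
  r p q := PathEquiv τ p.1 q.1
  iseqv := ⟨fun _ => ⟨rfl, fun _ => Iff.rfl⟩,
            fun h => ⟨h.1.symm, fun i => (h.2 i).symm⟩,
            fun h1 h2 => ⟨h1.1.trans h2.1, fun i => (h1.2 i).trans (h2.2 i)⟩⟩

/-- The number of `τ`-equivalence classes of ballot paths of length `n`. -/
noncomputable def numBallotClasses (τ : List Bool) (n : ℕ) : ℕ :=
  Nat.card (Quotient (ballotSetoid τ n))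

/-- The setoid of `τ`-equivalence on Dyck paths of semilength `n`. -/
def dyckSetoid (τ : List Bool) (n : ℕ) :
    Setoid {p : List Bool // IsDyck p ∧ p.length = 2 * n} where
  r p q := PathEquiv τ p.1 q.1
  iseqv := ⟨fun _ => ⟨rfl, fun _ => Iff.rfl⟩,
            fun h => ⟨h.1.symm, fun i => (h.2 i).symm⟩,
            fun h1 h2 => ⟨h1.1.trans h2.1, fun i => (h1.2 i).trans (h2.2 i)⟩⟩

/-- The number of `τ`-equivalence classes of Dyck paths of semilength `n`. -/
noncomputable def numDyckClasses (τ : List Bool) (n : ℕ) : ℕ :=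
  Nat.card (Quotient (dyckSetoid τ n))

/-!
The UD-class of a path is determined by which of its D-steps end a factor UD. Turning every other
D into U (`udNormalize`) gives a representative of the class in which every D directly follows a U.
Such a path is ballot, and it is the only one of its kind in its class, so the classes correspond
to the words of length `n` in the blocks U and UD; splitting off the first block shows that there
are `f (n + 1)` of them.
-/

open List

instance (τ p : List Bool) (i : ℕ) : Decidable (OccursAt τ p i) :=
  inferInstanceAs (Decidable (_ = _))

-- The prepended D forbids a leading D, the relation forbids DD.
def DownsFollowUps (l : List Bool) : Prop :=
  (false :: l).IsChain fun a b => a = true ∨ b = true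

abbrev DownsFollowUpsOfLength (m : ℕ) := {l : List Bool // l.length = m ∧ DownsFollowUps l}

theorem occursAt_UD_iff (p : List Bool) (i : ℕ) :
    OccursAt [true, false] p i ↔ p[i]? = some true ∧ p[i + 1]? = some false := by
  have h0 : p[i]? = (p.drop i)[0]? := by simp
  have h1 : p[i + 1]? = (p.drop i)[1]? := by simp
  rw [OccursAt, h0, h1]
  rcases p.drop i with _ | ⟨a, _ | ⟨b, t⟩⟩ <;> simp

theorem count_false_take_le_of_isChain {b : Bool} {l : List Bool}
    (h : (b :: l).IsChain fun a b => a = true ∨ b = true) (k : ℕ) :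
    (l.take k).count false ≤ (l.take k).count true + b.toNat := by
  induction l generalizing b k with
  | nil => simp
  | cons a l ih =>
    obtain ⟨hba, hl⟩ := isChain_cons_cons.1 h
    cases k with
    | zero => simp
    | succ k =>
      have := ih hl k
      cases a
      · obtain rfl : b = true := by simpa using hba
        simp at this ⊢; omega
      · cases b <;> simp at this ⊢ <;> omega

theorem DownsFollowUps.isBallot {l : List Bool} (hl : DownsFollowUps l) : IsBallot l :=
  fun k => by simpa using count_false_take_le_of_isChain hl k

theorem DownsFollowUps.occursAt_UD_iff {l : List Bool} (hl : DownsFollowUps l) (i : ℕ) :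
    OccursAt [true, false] l i ↔ l[i + 1]? = some false := by
  rw [_root_.occursAt_UD_iff]
  refine ⟨And.right, fun h => ⟨?_, h⟩⟩
  obtain ⟨hi, hfalse⟩ := List.getElem?_eq_some_iff.1 h
  have := isChain_iff_getElem.1 hl (i + 1) (by simp; omega)
  simp_all [getElem?_eq_getElem (show i < l.length by omega)]

theorem not_occursAt_UD_of_occursAt_UD_succ {p : List Bool} {i : ℕ}
    (h : OccursAt [true, false] p (i + 1)) : ¬OccursAt [true, false] p i := by
  rw [occursAt_UD_iff] at h ⊢
  simp [h.1]

def udNormalize (p : List Bool) : List Bool :=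
  (range p.length).map fun
    | 0 => true
    | i + 1 => !decide (OccursAt [true, false] p i)

@[simp]
theorem length_udNormalize (p : List Bool) : (udNormalize p).length = p.length := by
  simp [udNormalize]

theorem getElem_udNormalize_zero {p : List Bool} (h : 0 < (udNormalize p).length) :
    (udNormalize p)[0] = true := by
  simp [udNormalize]

theorem getElem_udNormalize_succ {p : List Bool} {i : ℕ} (h : i + 1 < (udNormalize p).length) :
    (udNormalize p)[i + 1] = !decide (OccursAt [true, false] p i) := by
  simp [udNormalize]

theorem getElem?_udNormalize_succ_eq_some_false_iff (p : List Bool) (i : ℕ) :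
    (udNormalize p)[i + 1]? = some false ↔ OccursAt [true, false] p i := by
  by_cases hi : i + 1 < p.length
  · rw [getElem?_eq_getElem (by simpa using hi), getElem_udNormalize_succ]
    simp
  · simp [getElem?_eq_none (show (udNormalize p).length ≤ i + 1 by simpa using hi),
      occursAt_UD_iff, getElem?_eq_none (show p.length ≤ i + 1 by omega)]

theorem udNormalize_eq_of_pathEquiv {p q : List Bool} (h : PathEquiv [true, false] p q) :
    udNormalize p = udNormalize q := by
  unfold udNormalize
  rw [h.1]
  congr 1
  funext j
  cases j
  · rfl
  · simp only [h.2]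

theorem downsFollowUps_udNormalize (p : List Bool) : DownsFollowUps (udNormalize p) := by
  refine isChain_iff_getElem.2 fun j hj => ?_
  cases j with
  | zero => simp [getElem_udNormalize_zero]
  | succ j =>
    simp only [getElem_cons_succ, getElem_udNormalize_succ]
    by_cases hocc : OccursAt [true, false] p j
    · left
      cases j with
      | zero => exact getElem_udNormalize_zero _
      | succ k =>
        simpa [getElem_udNormalize_succ] using not_occursAt_UD_of_occursAt_UD_succ hocc
    · simp [hocc]

theorem DownsFollowUps.udNormalize_eq {l : List Bool} (hl : DownsFollowUps l) :
    udNormalize l = l := by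
  refine ext_getElem (length_udNormalize l) fun j h _ => ?_
  cases j with
  | zero =>
    rw [getElem_udNormalize_zero]
    simpa using isChain_iff_getElem.1 hl 0 (by simpa using h)
  | succ i =>
    simp only [getElem_udNormalize_succ, hl.occursAt_UD_iff,
      getElem?_eq_getElem (show i + 1 < l.length by simpa using h)]
    cases l[i + 1] <;> simp

theorem pathEquiv_udNormalize (p : List Bool) : PathEquiv [true, false] (udNormalize p) p :=
  ⟨length_udNormalize p, fun i => by
    rw [(downsFollowUps_udNormalize p).occursAt_UD_iff,
      getElem?_udNormalize_succ_eq_some_false_iff]⟩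

theorem DownsFollowUps.cons_true {l : List Bool} (hl : DownsFollowUps l) :
    DownsFollowUps (true :: l) :=
  isChain_cons_cons.2 ⟨Or.inr rfl,
    IsChain.imp_head (R := fun a b : Bool => a = true ∨ b = true) (fun _ => Or.inl rfl) hl⟩

theorem DownsFollowUps.cons_true_cons_false {l : List Bool} (hl : DownsFollowUps l) :
    DownsFollowUps (true :: false :: l) :=
  isChain_cons_cons.2 ⟨Or.inr rfl, isChain_cons_cons.2 ⟨Or.inl rfl, hl⟩⟩

instance (m : ℕ) : Finite (DownsFollowUpsOfLength m) :=
  Finite.of_injective (β := List.Vector Bool m) (fun l => ⟨l.1, l.2.1⟩)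
    fun _ _ h => Subtype.ext (congrArg Subtype.val h :)

noncomputable def downsFollowUpsSuccSuccEquiv (m : ℕ) :
    DownsFollowUpsOfLength m ⊕ DownsFollowUpsOfLength (m + 1) ≃
      DownsFollowUpsOfLength (m + 2) :=
  Equiv.ofBijective
    (Sum.elim (fun l => ⟨true :: false :: l.1, by simp [l.2.1], l.2.2.cons_true_cons_false⟩)
      fun l => ⟨true :: l.1, by simp [l.2.1], l.2.2.cons_true⟩) <| by
    refine ⟨Function.Injective.sumElim ?_ ?_ ?_, ?_⟩
    · exact fun a b h => Subtype.ext (by simpa using congrArg Subtype.val h)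
    · exact fun a b h => Subtype.ext (by simpa using congrArg Subtype.val h)
    · intro a b h
      have hb := b.2.2
      rw [show b.1 = false :: a.1 by simpa using (congrArg Subtype.val h).symm] at hb
      simp [DownsFollowUps, isChain_cons_cons] at hb
    · rintro ⟨_ | ⟨a, _ | ⟨b, l⟩⟩, hlen, hl⟩
      · simp at hlen
      · simp at hlen
      rw [DownsFollowUps, isChain_cons_cons, isChain_cons_cons] at hl
      obtain ⟨ha, -, hbl⟩ := hl
      obtain rfl : a = true := by simpa using ha
      cases b
      · exact ⟨.inl ⟨l, by simpa using hlen, hbl⟩, rfl⟩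
      · exact ⟨.inr ⟨true :: l, by simpa using hlen, isChain_cons_cons.2 ⟨Or.inr rfl, hbl⟩⟩,
          rfl⟩

theorem card_downsFollowUpsOfLength : ∀ m, Nat.card (DownsFollowUpsOfLength m) = Nat.fib (m + 1)
  | 0 => Nat.card_eq_one_iff_unique.2
    ⟨⟨fun a b => Subtype.ext <|
        (length_eq_zero_iff.1 a.2.1).trans (length_eq_zero_iff.1 b.2.1).symm⟩,
      ⟨⟨[], rfl, isChain_singleton _⟩⟩⟩
  | 1 => by
    have eq_true : ∀ l : DownsFollowUpsOfLength 1, l.1 = [true] := by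
      rintro ⟨l, hlen, hl⟩
      obtain ⟨_ | _, rfl⟩ := length_eq_one_iff.1 hlen
      · simp [DownsFollowUps] at hl
      · rfl
    exact Nat.card_eq_one_iff_unique.2
      ⟨⟨fun a b => Subtype.ext ((eq_true a).trans (eq_true b).symm)⟩,
        ⟨⟨[true], rfl, by simp [DownsFollowUps]⟩⟩⟩
  | m + 2 => by
    rw [← Nat.card_congr (downsFollowUpsSuccSuccEquiv m), Nat.card_sum,
      card_downsFollowUpsOfLength m, card_downsFollowUpsOfLength (m + 1)]
    exact Nat.fib_add_two.symm

def udClassEquiv (n : ℕ) :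
    Quotient (ballotSetoid [true, false] n) ≃ DownsFollowUpsOfLength n where
  toFun := Quotient.lift
    (fun p => ⟨udNormalize p.1, (length_udNormalize _).trans p.2.2,
      downsFollowUps_udNormalize _⟩)
    fun _ _ h => Subtype.ext (udNormalize_eq_of_pathEquiv h)
  invFun l := Quotient.mk _ ⟨l.1, l.2.2.isBallot, l.2.1⟩
  left_inv := Quotient.ind fun p => Quotient.sound (pathEquiv_udNormalize p.1)
  right_inv l := Subtype.ext l.2.2.udNormalize_eq

theorem ud_classes_ballot_general (n : ℕ) :
    numBallotClasses [true, false] n = Nat.fib (n + 1) := by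
  rw [numBallotClasses, Nat.card_congr (udClassEquiv n), card_downsFollowUpsOfLength]

/-- the number of UD-equivalence classes of ballot paths of length
`n ≥ 1` is the `(n+1)`-st Fibonacci number. -/
theorem ud_classes_ballot (n : ℕ) (hn : 1 ≤ n) :
    numBallotClasses [true, false] n = Nat.fib (n + 1) :=
  ud_classes_ballot_general n
end

section
/- For every integer n ≥ 1, the number of DU-equivalence classes of ballot paths of length n equals f_n, the n-th Fibonacci number. -/
/-!
Replacing every step of a path by U, except the D of each occurrence of DU, gives a canonical
path `duCanon p` that determines the DU-class of `p`. A ballot path starts with U, so the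
canonical forms of ballot paths of length `n + 1` are U followed by a word of length `n` tiled by
the blocks U and DU; conversely every such word is a ballot path and its own canonical form.
Tilings of length `n` by blocks of lengths 1 and 2 are counted by `fib (n + 1)`.
-/

@[simp]
theorem occursAt_cons_succ (τ p : List Bool) (a : Bool) (i : ℕ) :
    OccursAt τ (a :: p) (i + 1) ↔ OccursAt τ p i :=
  Iff.rfl

theorem pathEquiv_cons_iff {τ p q : List Bool} {a b : Bool} :
    PathEquiv τ (a :: p) (b :: q) ↔
      (OccursAt τ (a :: p) 0 ↔ OccursAt τ (b :: q) 0) ∧ PathEquiv τ p q := by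
  simp only [PathEquiv, List.length_cons, Nat.add_right_cancel_iff]
  constructor
  · rintro ⟨hlen, hocc⟩
    exact ⟨hocc 0, hlen, fun i => hocc (i + 1)⟩
  · rintro ⟨h0, hlen, hocc⟩
    refine ⟨hlen, fun i => ?_⟩
    cases i with
    | zero => exact h0
    | succ i => exact hocc i

theorem numBallotClasses_eq_card_range {α : Type*} {τ : List Bool} {n : ℕ} (f : List Bool → α)
    (hf : ∀ p q, PathEquiv τ p q ↔ f p = f q) :
    numBallotClasses τ n =
      Nat.card (Set.range fun p : {p : List Bool // IsBallot p ∧ p.length = n} => f p.1) := by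
  have hker : ballotSetoid τ n = Setoid.ker fun p => f p.1 :=
    Setoid.ext fun p q => hf p.1 q.1
  rw [numBallotClasses, hker]
  exact Nat.card_congr (Setoid.quotientKerEquivRange _)

theorem IsBallot.head_eq_true {a : Bool} {p : List Bool} (h : IsBallot (a :: p)) : a = true := by
  cases a
  · simpa using h 1
  · rfl

theorem occursAt_du_zero (a : Bool) (p : List Bool) :
    OccursAt [false, true] (a :: p) 0 ↔ a = false ∧ p.head? = some true := by
  cases p <;> simp [OccursAt]

def duCanon : List Bool → List Bool
  | [] => []
  | a :: p => (!decide (a = false ∧ p.head? = some true)) :: duCanon p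

@[simp] theorem duCanon_nil : duCanon [] = [] := rfl

@[simp] theorem duCanon_true_cons (p : List Bool) : duCanon (true :: p) = true :: duCanon p := by
  simp [duCanon]

@[simp] theorem duCanon_false_true_cons (p : List Bool) :
    duCanon (false :: true :: p) = false :: true :: duCanon p := by
  simp [duCanon]

theorem pathEquiv_du_iff (p q : List Bool) :
    PathEquiv [false, true] p q ↔ duCanon p = duCanon q := by
  induction p generalizing q with
  | nil => cases q <;> simp [PathEquiv, duCanon]
  | cons a p ih =>
    cases q with
    | nil => simp [PathEquiv, duCanon]
    | cons b q => simp only [pathEquiv_cons_iff, occursAt_du_zero, ih, duCanon, List.cons.injEq,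
        Bool.not_inj_iff, decide_eq_decide]

def duBlocks : ℕ → Finset (List Bool)
  | 0 => {[]}
  | 1 => {[true]}
  | n + 2 =>
    (duBlocks (n + 1)).image (true :: ·) ∪ (duBlocks n).image (false :: true :: ·)

theorem mem_duBlocks_add_two {n : ℕ} {p : List Bool} :
    p ∈ duBlocks (n + 2) ↔
      (∃ q ∈ duBlocks (n + 1), true :: q = p) ∨ ∃ q ∈ duBlocks n, false :: true :: q = p := by
  simp [duBlocks]

theorem card_duBlocks : ∀ n, (duBlocks n).card = Nat.fib (n + 1)
  | 0 => rfl
  | 1 => rfl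
  | n + 2 => by
    have hdisj : Disjoint ((duBlocks (n + 1)).image (true :: ·))
        ((duBlocks n).image (false :: true :: ·)) := by
      simp [Finset.disjoint_left]
    rw [duBlocks, Finset.card_union_of_disjoint hdisj,
      Finset.card_image_of_injective _ List.cons_injective,
      Finset.card_image_of_injective _
        (fun _ _ h => List.cons_injective (List.cons_injective h) : (false :: true :: ·).Injective),
      card_duBlocks (n + 1), card_duBlocks n, Nat.fib_add_two (n := n + 1), add_comm]

theorem length_of_mem_duBlocks : ∀ {n : ℕ} {p : List Bool}, p ∈ duBlocks n → p.length = n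
  | 0, p, h => by simp_all [duBlocks]
  | 1, p, h => by simp_all [duBlocks]
  | n + 2, p, h => by
    rcases mem_duBlocks_add_two.1 h with ⟨q, hq, rfl⟩ | ⟨q, hq, rfl⟩ <;>
      simp [length_of_mem_duBlocks hq]

theorem duCanon_mem_duBlocks : ∀ p : List Bool, duCanon p ∈ duBlocks p.length
  | [] => by simp [duBlocks]
  | [a] => by simp [duCanon, duBlocks]
  | false :: true :: p =>
    mem_duBlocks_add_two.2 <| .inr ⟨_, duCanon_mem_duBlocks p, (duCanon_false_true_cons p).symm⟩
  | true :: b :: p =>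
    mem_duBlocks_add_two.2 <| .inl ⟨_, duCanon_mem_duBlocks (b :: p), (duCanon_true_cons _).symm⟩
  | false :: false :: p =>
    mem_duBlocks_add_two.2 <| .inl ⟨_, duCanon_mem_duBlocks (false :: p), by simp [duCanon]⟩

theorem duCanon_eq_self_of_mem_duBlocks :
    ∀ {n : ℕ} {p : List Bool}, p ∈ duBlocks n → duCanon p = p
  | 0, p, h => by simp_all [duBlocks]
  | 1, p, h => by simp_all [duBlocks, duCanon]
  | n + 2, p, h => by
    rcases mem_duBlocks_add_two.1 h with ⟨q, hq, rfl⟩ | ⟨q, hq, rfl⟩ <;>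
      simp [duCanon_eq_self_of_mem_duBlocks hq]

theorem count_false_take_le_of_mem_duBlocks : ∀ {n : ℕ} {p : List Bool}, p ∈ duBlocks n →
    ∀ k, (p.take k).count false ≤ (p.take k).count true + 1
  | 0, p, h, k => by simp_all [duBlocks]
  | 1, p, h, k => by cases k <;> simp_all [duBlocks]
  | n + 2, p, h, k => by
    rcases mem_duBlocks_add_two.1 h with ⟨q, hq, rfl⟩ | ⟨q, hq, rfl⟩
    · cases k with
      | zero => simp
      | succ k =>
        have := count_false_take_le_of_mem_duBlocks hq k
        simp only [List.take_succ_cons, List.count_cons]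
        grind
    · rcases k with _ | _ | k
      · simp
      · simp
      · have := count_false_take_le_of_mem_duBlocks hq k
        simp only [List.take_succ_cons, List.count_cons]
        grind

theorem isBallot_true_cons_of_mem_duBlocks {n : ℕ} {p : List Bool} (h : p ∈ duBlocks n) :
    IsBallot (true :: p) := by
  rintro (_ | k)
  · simp
  · simpa using count_false_take_le_of_mem_duBlocks h k

theorem range_duCanon_ballot (n : ℕ) :
    Set.range (fun p : {p : List Bool // IsBallot p ∧ p.length = n + 1} => duCanon p.1) =
      ↑((duBlocks n).image (true :: ·)) := by
  ext c
  simp only [Set.mem_range, Subtype.exists, Finset.coe_image, Set.mem_image, Finset.mem_coe]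
  constructor
  · rintro ⟨_ | ⟨a, p⟩, ⟨hb, hlen⟩, rfl⟩
    · simp at hlen
    · obtain rfl := hb.head_eq_true
      refine ⟨duCanon p, ?_, (duCanon_true_cons p).symm⟩
      simpa [Nat.succ_injective hlen] using duCanon_mem_duBlocks p
  · rintro ⟨p, hp, rfl⟩
    exact ⟨true :: p, ⟨isBallot_true_cons_of_mem_duBlocks hp, by simp [length_of_mem_duBlocks hp]⟩,
      by simp [duCanon_eq_self_of_mem_duBlocks hp]⟩

/-- the number of DU-equivalence classes of ballot paths of length
`n ≥ 1` is the `n`-th Fibonacci number. -/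
theorem du_classes_ballot (n : ℕ) (hn : 1 ≤ n) :
    numBallotClasses [false, true] n = Nat.fib n := by
  obtain ⟨m, rfl⟩ := Nat.exists_eq_add_of_le' hn
  rw [numBallotClasses_eq_card_range duCanon pathEquiv_du_iff, range_duCanon_ballot,
    Nat.card_coe_set_eq, Set.ncard_coe_finset,
    Finset.card_image_of_injective _ List.cons_injective, card_duBlocks]
end

section
/- For every n ≥ 0 and every ballot path p of length n, there exists exactly one ballot path p′ of length n such that p′ contains no occurrence of the factor DD and p′ is UD-equivalent to p. -/
/-!
A ballot path avoiding DD starts with U and has a U before each D, so its D's are exactly the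
second letters of its UD factors: such a path is determined by its length and its UD positions.
Conversely, for any path `p`, keeping as D only the steps that end a UD factor of `p` gives a
DD-free path starting with U, hence a ballot path, with the same UD positions as `p`.
-/

theorem isInfix_iff_exists_occursAt {τ p : List Bool} : τ <:+: p ↔ ∃ i, OccursAt τ p i := by
  rw [List.infix_iff_prefix_suffix]
  constructor
  · rintro ⟨t, hτ, ht⟩
    rw [List.suffix_iff_eq_drop] at ht
    exact ⟨_, (ht ▸ List.prefix_iff_eq_take.1 hτ).symm⟩
  · rintro ⟨i, h⟩
    exact ⟨p.drop i, List.prefix_iff_eq_take.2 h.symm, List.drop_suffix i p⟩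

theorem occursAt_pair_iff {a b : Bool} {p : List Bool} {i : ℕ} :
    OccursAt [a, b] p i ↔ p[i]? = some a ∧ p[i + 1]? = some b := by
  have h0 : p[i]? = (p.drop i)[0]? := by simp
  have h1 : p[i + 1]? = (p.drop i)[1]? := by simp
  rw [OccursAt, h0, h1]
  rcases p.drop i with _ | ⟨x, _ | ⟨y, t⟩⟩ <;> simp

theorem PathEquiv.cons_false {σ p q : List Bool} (h : PathEquiv (true :: σ) p q) :
    PathEquiv (true :: σ) (false :: p) (false :: q) := by
  refine ⟨by simp [h.1], fun i => ?_⟩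
  cases i with
  | zero => simp [OccursAt]
  | succ i => exact h.2 i

/- A DD-free path matches each D with the U just before it, except possibly a leading D. -/
theorem count_false_le_count_true_of_not_infix_DD {r : List Bool}
    (hr : ¬ [false, false] <:+: r) :
    r.count false ≤ r.count true + if r.head? = some false then 1 else 0 := by
  induction r with
  | nil => simp
  | cons b r ih =>
    have hr' : ¬ [false, false] <:+: r := fun h => hr (h.trans (List.suffix_cons b r).isInfix)
    cases b with
    | true => have := ih hr'; split_ifs at this <;> simp <;> omega
    | false =>
      have hhead : r.head? ≠ some false := by
        intro h
        obtain ⟨t, rfl⟩ : ∃ t, r = false :: t := by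
          cases r <;> simp_all
        exact hr (List.prefix_append [false, false] t).isInfix
      simpa [hhead] using ih hr'

theorem isBallot_of_not_infix_DD {r : List Bool} (hhead : r.head? ≠ some false)
    (hr : ¬ [false, false] <:+: r) : IsBallot r := by
  intro k
  have hk : ¬ [false, false] <:+: r.take k := fun h => hr (h.trans (r.take_prefix k).isInfix)
  have hhead_k : (r.take k).head? ≠ some false := by
    rw [List.head?_take]; split_ifs <;> simp [hhead]
  simpa [hhead_k] using count_false_le_count_true_of_not_infix_DD hk

theorem IsBallot.head?_ne_some_false {r : List Bool} (hr : IsBallot r) :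
    r.head? ≠ some false := by
  intro h
  have := hr 1
  cases r <;> simp_all

/-- Every D of `p` that does not end a UD factor is turned into a U; the padding `false ::` makes
the first step a U. -/
def udNormalForm (p : List Bool) : List Bool :=
  List.zipWith (fun a b => !a || b) (false :: p) p

@[simp]
theorem length_udNormalForm (p : List Bool) : (udNormalForm p).length = p.length := by
  simp [udNormalForm]

theorem getElem?_udNormalForm_eq_some_false {p : List Bool} {j : ℕ} :
    (udNormalForm p)[j]? = some false ↔ OccursAt [true, false] (false :: p) j := by
  rw [occursAt_pair_iff, udNormalForm, List.getElem?_zipWith, List.getElem?_cons_succ]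
  rcases (false :: p)[j]? with _ | _ | _ <;> rcases p[j]? with _ | _ | _ <;> simp

theorem getElem?_udNormalForm_of_eq_some_true {p : List Bool} {j : ℕ} (h : p[j]? = some true) :
    (udNormalForm p)[j]? = some true := by
  have hj : j < (false :: p).length := by
    have := (List.getElem?_eq_some_iff.1 h).1
    simp only [List.length_cons]; omega
  rw [udNormalForm, List.getElem?_zipWith, h, List.getElem?_eq_getElem hj]
  simp

theorem getElem?_udNormalForm_succ_eq_some_false {p : List Bool} {i : ℕ} :
    (udNormalForm p)[i + 1]? = some false ↔ OccursAt [true, false] p i :=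
  getElem?_udNormalForm_eq_some_false

theorem head?_udNormalForm_ne_some_false (p : List Bool) :
    (udNormalForm p).head? ≠ some false := by
  rw [List.head?_eq_getElem?, Ne, getElem?_udNormalForm_eq_some_false, occursAt_pair_iff]
  rintro ⟨h, -⟩
  cases h

theorem not_infix_DD_udNormalForm (p : List Bool) : ¬ [false, false] <:+: udNormalForm p := by
  intro h
  obtain ⟨i, hi⟩ := isInfix_iff_exists_occursAt.1 h
  rw [occursAt_pair_iff, getElem?_udNormalForm_eq_some_false,
    getElem?_udNormalForm_succ_eq_some_false, occursAt_pair_iff, occursAt_pair_iff,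
    List.getElem?_cons_succ] at hi
  obtain ⟨⟨-, hfalse⟩, htrue, -⟩ := hi
  simp [hfalse] at htrue

theorem isBallot_udNormalForm (p : List Bool) : IsBallot (udNormalForm p) :=
  isBallot_of_not_infix_DD (head?_udNormalForm_ne_some_false p) (not_infix_DD_udNormalForm p)

theorem pathEquiv_udNormalForm (p : List Bool) : PathEquiv [true, false] p (udNormalForm p) := by
  refine ⟨(length_udNormalForm p).symm, fun i => ?_⟩
  rw [occursAt_pair_iff (p := udNormalForm p), getElem?_udNormalForm_succ_eq_some_false]
  constructor
  · intro h
    exact ⟨getElem?_udNormalForm_of_eq_some_true (occursAt_pair_iff.1 h).1, h⟩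
  · exact And.right

theorem udNormalForm_eq_of_pathEquiv {p q : List Bool} (h : PathEquiv [true, false] p q) :
    udNormalForm p = udNormalForm q := by
  apply List.ext_getElem (by simp [h.1])
  intro j hp hq
  have eq_false_iff (r : List Bool) (hr : j < (udNormalForm r).length) :
      (udNormalForm r)[j] = false ↔ OccursAt [true, false] (false :: r) j := by
    rw [← getElem?_udNormalForm_eq_some_false, List.getElem?_eq_getElem hr, Option.some_inj]
  have hiff := ((eq_false_iff p hp).trans (h.cons_false.2 j)).trans (eq_false_iff q hq).symm
  simpa using hiff

theorem occursAt_cons_false_of_getElem?_eq_some_false {r : List Bool} (hr : IsBallot r)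
    (hDD : ¬ [false, false] <:+: r) {j : ℕ} (hj : r[j]? = some false) :
    OccursAt [true, false] (false :: r) j := by
  rw [occursAt_pair_iff, List.getElem?_cons_succ]
  refine ⟨?_, hj⟩
  cases j with
  | zero => exact absurd (List.head?_eq_getElem? ▸ hj) hr.head?_ne_some_false
  | succ i =>
    rw [List.getElem?_cons_succ]
    rcases hi : r[i]? with _ | _ | _
    · have := (List.getElem?_eq_some_iff.1 hj).1
      rw [List.getElem?_eq_none_iff] at hi
      omega
    · exact absurd (isInfix_iff_exists_occursAt.2 ⟨i, occursAt_pair_iff.2 ⟨hi, hj⟩⟩) hDD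
    · rfl

theorem udNormalForm_eq_self {r : List Bool} (hr : IsBallot r) (hDD : ¬ [false, false] <:+: r) :
    udNormalForm r = r := by
  apply List.ext_getElem?
  intro j
  rcases hj : r[j]? with _ | _ | _
  · simpa using List.getElem?_eq_none_iff.1 hj
  · exact getElem?_udNormalForm_eq_some_false.2
      (occursAt_cons_false_of_getElem?_eq_some_false hr hDD hj)
  · exact getElem?_udNormalForm_of_eq_some_true hj

theorem ud_unique_representative_general (n : ℕ) (p : List Bool)
    (hlen : p.length = n) :
    ∃! p' : List Bool, IsBallot p' ∧ p'.length = n ∧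
      ¬ [false, false] <:+: p' ∧ PathEquiv [true, false] p p' := by
  refine ⟨udNormalForm p, ⟨isBallot_udNormalForm p, (length_udNormalForm p).trans hlen,
    not_infix_DD_udNormalForm p, pathEquiv_udNormalForm p⟩, ?_⟩
  rintro r ⟨hr, -, hDD, hpr⟩
  rw [← udNormalForm_eq_self hr hDD, udNormalForm_eq_of_pathEquiv hpr]

/-- every ballot path of length `n` is UD-equivalent to a unique
ballot path of length `n` avoiding the factor DD. -/
theorem ud_unique_representative (n : ℕ) (p : List Bool)
    (hp : IsBallot p) (hlen : p.length = n) :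
    ∃! p' : List Bool, IsBallot p' ∧ p'.length = n ∧
      ¬ [false, false] <:+: p' ∧ PathEquiv [true, false] p p' :=
  ud_unique_representative_general n p hlen
end

section
/- Let r ≥ 1, and let α and β be Dyck paths such that β begins with UU, α ends with DD, and either α contains an occurrence of the factor DDD, or there exist positions i < j in α such that DD occurs at position i and UUDD occurs at position j. Then the path α (UD)^r UU β (which is a ballot path ending at height 2) is UDU-equivalent to some Dyck path. -/
/-!
Replacing the factor UUUU, formed by the middle UU and the first two steps of `β`, by UDDU
neither creates nor destroys an occurrence of UDU, but lowers the final height from 2 to -2.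
The hypothesis on `α` allows a UDU-neutral surgery inside `α` that never lowers the path and
raises its final height by 2: turn U D D D into U U D D, or turn U D D U into U U U U and a later
U U D D into U D D D. The result ends at height 0 and dominates the Dyck path `α (UD)^(r+1) β`.
-/

theorem occursAt_append_of_add_le {τ x y : List Bool} {k : ℕ} (h : k + τ.length ≤ x.length) :
    OccursAt τ (x ++ y) k ↔ OccursAt τ x k := by
  unfold OccursAt
  rw [List.drop_append_of_le_length (by omega), List.take_append_of_le_length (by simp; omega)]

theorem occursAt_append_of_le {τ x y : List Bool} {k : ℕ} (h : x.length ≤ k) :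
    OccursAt τ (x ++ y) k ↔ OccursAt τ y (k - x.length) := by
  unfold OccursAt
  rw [List.drop_append, List.drop_eq_nil_of_le h, List.nil_append]

theorem OccursAt.exists_eq_append {τ p : List Bool} {i : ℕ} (hτ : τ ≠ [])
    (h : OccursAt τ p i) :
    ∃ s t, s.length = i ∧ p = s ++ τ ++ t := by
  refine ⟨p.take i, (p.drop i).drop τ.length, List.length_take_of_le ?_, ?_⟩
  · by_contra hlt
    rw [OccursAt, List.drop_eq_nil_of_le (by omega), List.take_nil] at h
    exact hτ h.symm
  · conv_lhs =>
      rw [← List.take_append_drop i p, ← List.take_append_drop τ.length (p.drop i), h]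
    simp

theorem PathEquiv.refl (τ p : List Bool) : PathEquiv τ p p := ⟨rfl, fun _ => Iff.rfl⟩

theorem PathEquiv.symm {τ p q : List Bool} (h : PathEquiv τ p q) : PathEquiv τ q p :=
  ⟨h.1.symm, fun i => (h.2 i).symm⟩

theorem PathEquiv.trans {τ p q r : List Bool} (h₁ : PathEquiv τ p q) (h₂ : PathEquiv τ q r) :
    PathEquiv τ p r :=
  ⟨h₁.1.trans h₂.1, fun i => (h₁.2 i).trans (h₂.2 i)⟩

theorem PathEquiv.append_of_common_suffix {τ s s' t : List Bool} (v : List Bool)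
    (h : PathEquiv τ (s ++ t) (s' ++ t)) (ht : τ.length ≤ t.length + 1) :
    PathEquiv τ (s ++ t ++ v) (s' ++ t ++ v) := by
  have hs : s.length = s'.length := by simpa using h.1
  refine ⟨by simpa using hs, fun k => ?_⟩
  by_cases hk : k + τ.length ≤ s.length + t.length
  · rw [occursAt_append_of_add_le (x := s ++ t) (by simpa using hk),
      occursAt_append_of_add_le (x := s' ++ t) (by simpa [← hs] using hk)]
    exact h.2 k
  · rw [List.append_assoc, List.append_assoc, occursAt_append_of_le (x := s) (by omega),
      occursAt_append_of_le (x := s') (by omega), hs]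

theorem not_occursAt_udu_append_cons_true {x y : List Bool} {k : ℕ} (hk : k + 1 = x.length) :
    ¬ OccursAt [true, false, true] (x ++ true :: y) k := by
  obtain ⟨x, b, rfl⟩ : ∃ x' b, x = x' ++ [b] := by
    rcases List.eq_nil_or_concat x with rfl | ⟨x', b, rfl⟩
    · simp at hk
    · exact ⟨x', b, List.concat_eq_append⟩
  obtain rfl : k = x.length := by simpa using hk
  simp [OccursAt]

/-- No UDU has its middle step on a common up-step, so such a step splits the comparison. -/
theorem PathEquiv.udu_split {x x' y y' : List Bool}
    (hx : PathEquiv [true, false, true] (x ++ [true]) (x' ++ [true]))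
    (hy : PathEquiv [true, false, true] (true :: y) (true :: y')) :
    PathEquiv [true, false, true] (x ++ true :: y) (x' ++ true :: y') := by
  have hlen : x.length = x'.length := by simpa using hx.1
  refine ⟨by simpa [hlen] using hy.1, fun k => ?_⟩
  rcases lt_trichotomy (k + 1) x.length with hk | hk | hk
  · rw [List.append_cons x, List.append_cons x',
      occursAt_append_of_add_le (x := x ++ [true]) (by simp; omega),
      occursAt_append_of_add_le (x := x' ++ [true]) (by simp; omega)]
    exact hx.2 k
  · exact iff_of_false (not_occursAt_udu_append_cons_true hk)
      (not_occursAt_udu_append_cons_true (hlen ▸ hk))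
  · rw [occursAt_append_of_le (by omega), occursAt_append_of_le (by omega), ← hlen]
    exact hy.2 _

theorem pathEquiv_udu_uddd_uudd (u v : List Bool) :
    PathEquiv [true, false, true] (u ++ [true, false, false, false] ++ v)
      (u ++ [true, true, false, false] ++ v) := by
  have base : PathEquiv [true, false, true] [true, false, false, false]
      [true, true, false, false] :=
    ⟨rfl, fun i => by rcases i with _ | _ | _ | _ | i <;> simp [OccursAt]⟩
  have hsuffix := PathEquiv.append_of_common_suffix (s := [true, false]) (s' := [true, true])
    (t := [false, false]) v base le_rfl
  simpa using (PathEquiv.refl _ (u ++ [true])).udu_split hsuffix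

theorem pathEquiv_udu_uddu_uuuu (u v : List Bool) :
    PathEquiv [true, false, true] (u ++ [true, false, false, true] ++ v)
      (u ++ [true, true, true, true] ++ v) := by
  have base : PathEquiv [true, false, true] ([true, false, false] ++ [true])
      ([true, true, true] ++ [true]) :=
    ⟨rfl, fun i => by rcases i with _ | _ | _ | _ | i <;> simp [OccursAt]⟩
  simpa using (PathEquiv.refl _ (u ++ [true])).udu_split
    (base.udu_split (PathEquiv.refl _ (true :: v)))

theorem isBallot_iff_pathHeight_nonneg {p : List Bool} :
    IsBallot p ↔ ∀ j, 0 ≤ pathHeight p j := by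
  simp only [IsBallot, pathHeight, sub_nonneg, Nat.cast_le]

@[simp]
theorem pathHeight_zero (p : List Bool) : pathHeight p 0 = 0 := by
  simp [pathHeight]

theorem pathHeight_of_length_le {p : List Bool} {j : ℕ} (h : p.length ≤ j) :
    pathHeight p j = pathHeight p p.length := by
  simp only [pathHeight, List.take_of_length_le h, List.take_length]

theorem pathHeight_append (x y : List Bool) (j : ℕ) :
    pathHeight (x ++ y) j = pathHeight x j + pathHeight y (j - x.length) := by
  simp only [pathHeight, List.take_append, List.count_append]
  push_cast
  ring

theorem pathHeight_length_append (x y : List Bool) :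
    pathHeight (x ++ y) (x ++ y).length = pathHeight x x.length + pathHeight y y.length := by
  rw [pathHeight_append, pathHeight_of_length_le (by simp)]
  simp

theorem isDyck_iff_pathHeight {p : List Bool} :
    IsDyck p ↔ (∀ j, 0 ≤ pathHeight p j) ∧ pathHeight p p.length = 0 := by
  rw [IsDyck, isBallot_iff_pathHeight_nonneg]
  simp [pathHeight, sub_eq_zero]

theorem IsDyck.append {x y : List Bool} (hx : IsDyck x) (hy : IsDyck y) : IsDyck (x ++ y) := by
  rw [isDyck_iff_pathHeight] at *
  refine ⟨fun j => ?_, ?_⟩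
  · rw [pathHeight_append]
    exact add_nonneg (hx.1 j) (hy.1 _)
  · rw [pathHeight_length_append, hx.2, hy.2, add_zero]

theorem isDyck_flatten_replicate_ud (r : ℕ) :
    IsDyck (List.replicate r [true, false]).flatten := by
  induction r with
  | zero => exact ⟨fun k => by simp, rfl⟩
  | succ r ih =>
    rw [List.replicate_succ, List.flatten_cons]
    refine IsDyck.append ⟨fun k => ?_, rfl⟩ ih
    rcases k with _ | _ | k <;> simp

theorem pathHeight_append_le {x x' y y' : List Bool} {c : ℤ} (hlen : x.length = x'.length)
    (hx : ∀ j, pathHeight x j ≤ pathHeight x' j + c)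
    (hy : ∀ k, pathHeight x x.length + pathHeight y k ≤
      pathHeight x' x'.length + pathHeight y' k + c)
    (j : ℕ) : pathHeight (x ++ y) j ≤ pathHeight (x' ++ y') j + c := by
  rw [pathHeight_append, pathHeight_append, ← hlen]
  rcases le_or_gt j x.length with hj | hj
  · simpa [Nat.sub_eq_zero_of_le hj] using hx j
  · rw [pathHeight_of_length_le hj.le, pathHeight_of_length_le (p := x') (hlen ▸ hj.le)]
    exact hy _

theorem pathHeight_append_le_append_left (u : List Bool) {y y' : List Bool} {c : ℤ} (hc : 0 ≤ c)
    (hy : ∀ k, pathHeight y k ≤ pathHeight y' k + c) (j : ℕ) :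
    pathHeight (u ++ y) j ≤ pathHeight (u ++ y') j + c :=
  pathHeight_append_le rfl (fun _ => le_add_of_nonneg_right hc)
    (fun k => by linarith [hy k]) j

theorem pathHeight_append_le_append_right {s s' : List Bool} (v : List Bool) {c : ℤ}
    (hlen : s.length = s'.length) (hs : ∀ j, pathHeight s j ≤ pathHeight s' j + c) (j : ℕ) :
    pathHeight (s ++ v) j ≤ pathHeight (s' ++ v) j + c :=
  pathHeight_append_le hlen hs
    (fun k => by linarith [hs s.length, pathHeight_of_length_le (p := s') hlen.symm.le]) j

theorem IsBallot.not_false_prefix {p : List Bool} (h : IsBallot p) : ¬ [false] <+: p :=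
  fun ⟨t, ht⟩ => by simpa [← ht] using h 1

theorem replicate_prefix_or_exists_cons_replicate_infix {γ : Type*} {a : γ} {n : ℕ}
    {l : List γ} (h : List.replicate n a <:+: l) :
    List.replicate n a <+: l ∨ ∃ b, b ≠ a ∧ b :: List.replicate n a <:+: l := by
  induction l with
  | nil => exact Or.inl (by simpa using h)
  | cons c l ih =>
    rcases List.infix_cons_iff.1 h with hp | hi
    · exact Or.inl hp
    rcases ih hi with hp | ⟨b, hb, hi⟩
    · by_cases hc : c = a
      · subst hc
        refine Or.inl (List.IsPrefix.trans ?_ (List.cons_prefix_cons.2 ⟨rfl, hp⟩))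
        rw [← List.replicate_succ, List.replicate_succ']
        exact List.prefix_append _ _
      · exact Or.inr ⟨c, hc, (List.cons_prefix_cons.2 ⟨rfl, hp⟩).isInfix⟩
    · exact Or.inr ⟨b, hb, hi.trans (List.suffix_cons c l).isInfix⟩

theorem exists_eq_append_uddd {α : List Bool} (hhead : ¬ [false] <+: α)
    (h : [false, false, false] <:+: α) : ∃ u v, α = u ++ [true, false, false, false] ++ v := by
  rcases replicate_prefix_or_exists_cons_replicate_infix (n := 3) h with hp | ⟨b, hb, u, v, huv⟩
  · exact absurd ((List.prefix_append [false] [false, false]).trans hp) hhead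
  · obtain rfl : b = true := by simpa using hb
    exact ⟨u, v, huv.symm⟩

theorem exists_eq_append_uddu {α : List Bool} (hhead : ¬ [false] <+: α)
    (hD3 : ¬ [false, false, false] <:+: α) {i j : ℕ} (hij : i < j)
    (hi : OccursAt [false, false] α i) (hj : OccursAt [true, true, false, false] α j) :
    ∃ u t w v, α = u ++ [true, false, false, true] ++ t ∧
      true :: t = w ++ [true, true, false, false] ++ v := by
  obtain ⟨s, t, rfl, rfl⟩ := hi.exists_eq_append (by simp)
  rw [List.append_assoc, occursAt_append_of_le (by omega)] at hj
  have hj2 : 2 ≤ j - s.length := by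
    by_contra h1
    obtain h1 : j - s.length = 1 := by omega
    simp [h1, OccursAt] at hj
  rw [occursAt_append_of_le (x := [false, false]) (by simpa using hj2)] at hj
  obtain ⟨w, v, -, hwv⟩ := hj.exists_eq_append (by simp)
  obtain ⟨u, rfl⟩ : ∃ u, s = u ++ [true] := by
    rcases List.eq_nil_or_concat s with rfl | ⟨u, b, rfl⟩
    · exact absurd (by simp) hhead
    · cases b
      · exact absurd ⟨u, t, by simp⟩ hD3
      · exact ⟨u, List.concat_eq_append⟩
  obtain ⟨t, rfl⟩ : ∃ t', t = true :: t' := by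
    rcases t with _ | ⟨b, t⟩
    · simp at hwv
    · cases b
      · exact absurd ⟨u ++ [true], t, by simp⟩ hD3
      · exact ⟨t, rfl⟩
  exact ⟨u, t, w, v, by simp, hwv⟩

structure UduRaise (α A : List Bool) : Prop where
  equiv : ∀ T, PathEquiv [true, false, true] (α ++ T) (A ++ T)
  le : ∀ j, pathHeight α j ≤ pathHeight A j
  height : pathHeight A A.length = pathHeight α α.length + 2

theorem uduRaise_uddd (u v : List Bool) :
    UduRaise (u ++ [true, false, false, false] ++ v) (u ++ [true, true, false, false] ++ v) where
  equiv T := by simpa using pathEquiv_udu_uddd_uudd u (v ++ T)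
  le j := by
    have base : ∀ k, pathHeight [true, false, false, false] k ≤
        pathHeight [true, true, false, false] k + 0 := by
      intro k; rcases k with _ | _ | _ | _ | k <;> simp [pathHeight]
    simpa using pathHeight_append_le_append_left u le_rfl
      (pathHeight_append_le_append_right v (by rfl) base) j
  height := by
    simp only [pathHeight_length_append]
    simp [pathHeight]
    ring

theorem uduRaise_uddu {u t w v : List Bool}
    (ht : true :: t = w ++ [true, true, false, false] ++ v) :
    UduRaise (u ++ [true, false, false, true] ++ t)
      (u ++ [true, true, true] ++ w ++ [true, false, false, false] ++ v) where
  equiv T := by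
    have h₁ := pathEquiv_udu_uddu_uuuu u (t ++ T)
    have h₂ := (pathEquiv_udu_uddd_uudd (u ++ [true, true, true] ++ w) (v ++ T)).symm
    have e : u ++ [true, true, true, true] ++ (t ++ T) =
        u ++ [true, true, true] ++ w ++ [true, true, false, false] ++ (v ++ T) := by
      simpa using congrArg (fun l => u ++ true :: true :: true :: l ++ T) ht
    rw [e] at h₁
    simpa using h₁.trans h₂
  le j := by
    have e : u ++ [true, false, false, true] ++ t =
        u ++ ([true, false, false] ++ (w ++ ([true, true, false, false] ++ v))) := by
      simpa using congrArg (fun l => u ++ true :: false :: false :: l) ht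
    have base₁ : ∀ k, pathHeight [true, false, false] k ≤
        pathHeight [true, true, true] k + 0 := by
      intro k; rcases k with _ | _ | _ | k <;> simp [pathHeight]
    have base₂ : ∀ k, pathHeight [true, true, false, false] k ≤
        pathHeight [true, false, false, false] k + 2 := by
      intro k; rcases k with _ | _ | _ | _ | k <;> simp [pathHeight]
    have tail := pathHeight_append_le_append_left w zero_le_two
      (pathHeight_append_le_append_right v (by rfl) base₂)
    have step : ∀ k, pathHeight [true, false, false] 3 +
        pathHeight (w ++ ([true, true, false, false] ++ v)) k ≤
        pathHeight [true, true, true] 3 +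
          pathHeight (w ++ ([true, false, false, false] ++ v)) k + 0 := by
      intro k
      have h₁ : pathHeight [true, false, false] 3 = -1 := by simp [pathHeight]
      have h₂ : pathHeight [true, true, true] 3 = 3 := by simp [pathHeight]
      linarith [tail k]
    rw [e]
    simpa using pathHeight_append_le_append_left u le_rfl
      (pathHeight_append_le (by rfl) base₁ step) j
  height := by
    have e : u ++ [true, false, false, true] ++ t =
        u ++ [true, false, false] ++ w ++ [true, true, false, false] ++ v := by
      simpa using congrArg (fun l => u ++ true :: false :: false :: l) ht
    rw [e]
    simp only [pathHeight_length_append]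
    simp [pathHeight]
    ring

theorem exists_uduRaise {α : List Bool} (hhead : ¬ [false] <+: α)
    (hcond : [false, false, false] <:+: α ∨
      ∃ i j : ℕ, i < j ∧ OccursAt [false, false] α i ∧
        OccursAt [true, true, false, false] α j) :
    ∃ A, UduRaise α A := by
  by_cases hD3 : [false, false, false] <:+: α
  · obtain ⟨u, v, rfl⟩ := exists_eq_append_uddd hhead hD3
    exact ⟨_, uduRaise_uddd u v⟩
  · obtain ⟨i, j, hij, hi, hj⟩ := hcond.resolve_left hD3
    obtain ⟨u, t, w, v, rfl, ht⟩ := exists_eq_append_uddu hhead hD3 hij hi hj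
    exact ⟨_, uduRaise_uddu ht⟩

theorem UduRaise.isDyck_append {α A y₀ y : List Bool} (hA : UduRaise α A)
    (h₀ : IsDyck (α ++ y₀)) (hy : ∀ k, pathHeight y₀ k ≤ pathHeight y k + 2)
    (hfinal : pathHeight y y.length + 2 = pathHeight y₀ y₀.length) : IsDyck (A ++ y) := by
  rw [isDyck_iff_pathHeight] at h₀ ⊢
  have hlen : α.length = A.length := by simpa using (hA.equiv []).1
  refine ⟨fun j => ?_, ?_⟩
  · have := pathHeight_append_le (y := y₀) (y' := y) hlen (c := 0) (by simpa using hA.le)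
      (fun k => by linarith [hA.height, hy k]) j
    linarith [h₀.1 j]
  · rw [pathHeight_length_append] at h₀ ⊢
    linarith [hA.height, h₀.2]

theorem udu_second_form_equiv_dyck_general (r : ℕ) (α β : List Bool)
    (hα : IsDyck α) (hβ : IsDyck β)
    (hβstart : [true, true] <+: β)
    (hcond : [false, false, false] <:+: α ∨
      ∃ i j : ℕ, i < j ∧ OccursAt [false, false] α i ∧
        OccursAt [true, true, false, false] α j) :
    ∃ q : List Bool, IsDyck q ∧
      PathEquiv [true, false, true]
        (α ++ (List.replicate r [true, false]).flatten ++ [true, true] ++ β) q := by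
  obtain ⟨b, rfl⟩ := hβstart
  obtain ⟨A, hA⟩ := exists_uduRaise hα.1.not_false_prefix hcond
  set M := (List.replicate r [true, false]).flatten
  have hud : IsDyck [true, false] := by simpa using isDyck_flatten_replicate_ud 1
  have base : ∀ k, pathHeight [true, false, true, true] k ≤
      pathHeight [true, false, false, true] k + 2 := by
    intro k; rcases k with _ | _ | _ | _ | k <;> simp [pathHeight]
  refine ⟨A ++ (M ++ ([true, false, false, true] ++ b)), ?_, ?_⟩
  · refine hA.isDyck_append (y₀ := M ++ ([true, false, true, true] ++ b)) ?_
      (pathHeight_append_le_append_left M zero_le_two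
        (pathHeight_append_le_append_right b (by rfl) base)) ?_
    · simpa using hα.append ((isDyck_flatten_replicate_ud r).append (hud.append hβ))
    · simp only [pathHeight_length_append]
      simp [pathHeight]
      ring
  · have h₁ := (pathEquiv_udu_uddu_uuuu (α ++ M) b).symm
    have h₂ := hA.equiv (M ++ ([true, false, false, true] ++ b))
    simp only [List.append_assoc, List.cons_append, List.nil_append] at h₁ h₂ ⊢
    exact h₁.trans h₂

/-- if `α, β` are Dyck paths, `β` begins with UU, `α` ends with DD and
`α` has an occurrence of DDD or an occurrence of DD before an occurrence of UUDD,
then `α (UD)^r UU β` is UDU-equivalent to a Dyck path (for `r ≥ 1`). -/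
theorem udu_second_form_equiv_dyck (r : ℕ) (hr : 1 ≤ r) (α β : List Bool)
    (hα : IsDyck α) (hβ : IsDyck β)
    (hβstart : [true, true] <+: β)
    (hαend : [false, false] <:+ α)
    (hcond : [false, false, false] <:+: α ∨
      ∃ i j : ℕ, i < j ∧ OccursAt [false, false] α i ∧
        OccursAt [true, true, false, false] α j) :
    ∃ q : List Bool, IsDyck q ∧
      PathEquiv [true, false, true]
        (α ++ (List.replicate r [true, false]).flatten ++ [true, true] ++ β) q :=
  udu_second_form_equiv_dyck_general r α β hα hβ hβstart hcond
end

section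
/- Let M be the (unique) formal power series over ℚ satisfying M = 1 + x·M + x²·M² (the Motzkin generating function), and let M(x²) denote the series obtained from M by substituting x² for x. Let c_n denote the number of DD-equivalence classes of ballot paths of length n (so c₀ = 1). Then in the ring of formal power series over ℚ, (∑_{n≥0} c_n xⁿ) · (1 − x + x² − x³·M(x²)) = 1 + x²·M(x²). -/
/-!
Every `DD`-equivalence class contains exactly one path without an isolated `D`: turn each `D`
lying in no occurrence of `DD` into a `U`. This replacement keeps ballot paths ballot, so `c_n`
counts the ballot paths of length `n` without an isolated `D`.

Let `A`, `D`, `W` be the generating functions of such ballot paths, of such Dyck paths, and of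
Dyck paths `w` for which `w D` has no isolated `D`. Cutting a ballot path after its last visit
to height `0` gives `A = D + x D A`. Writing a nonempty Dyck path as `u U w D` with `u`, `w` Dyck
gives `D = 1 + x² D W`; and `u U w D D` has no isolated `D` iff `u` has none and `w` is empty or
counted by `W`, so `W = x² D (W + 1)`. Eliminating `D`, both `W` and `x² M(x²)` solve
`(1 + x²) F = x² (1 + F)²`, whose solution in `ℚ⟦x⟧` is unique; with `x² M(x²) = W` the claimed
identity becomes a ring identity in `A`, `D`, `W`.
-/

open PowerSeries
open Finset.HasAntidiagonal

section LengthGF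

variable {α : Type*}

noncomputable def lengthGF (S : Set (List α)) : ℚ⟦X⟧ :=
  mk fun n => (Nat.card {p // p ∈ S ∧ p.length = n} : ℚ)

theorem lengthGF_singleton_nil : lengthGF ({[]} : Set (List α)) = 1 := by
  ext (_ | n)
  · have : Unique {p : List α // p = [] ∧ p.length = 0} :=
      ⟨⟨⟨[], rfl, rfl⟩⟩, fun ⟨_, hp, _⟩ => Subtype.ext hp⟩
    simp [lengthGF]
  · have : IsEmpty {p : List α // p = [] ∧ p.length = n + 1} := ⟨fun ⟨_, rfl, h⟩ => by simp at h⟩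
    simp [lengthGF]

variable [Finite α] {S T : Set (List α)}

instance finite_subtype_mem_length (S : Set (List α)) (n : ℕ) :
    Finite {p // p ∈ S ∧ p.length = n} :=
  ((List.finite_length_eq α n).subset fun _ hp => hp.2).to_subtype

theorem lengthGF_union (h : Disjoint S T) : lengthGF (S ∪ T) = lengthGF S + lengthGF T := by
  classical
  ext n
  simp only [lengthGF, coeff_mk, map_add, ← Nat.cast_add, ← Nat.card_sum]
  congr 1
  refine Nat.card_congr ((Equiv.subtypeEquivRight fun p => ?_).trans
    (subtypeOrEquiv _ _ ?_))
  · exact or_and_right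
  · exact disjoint_iff_inf_le.2 fun p ⟨hS, hT⟩ => h.ne_of_mem hS.1 hT.1 rfl

theorem card_mem_prod_length_add (n : ℕ) :
    Nat.card {x : List α × List α // x ∈ S ×ˢ T ∧ x.1.length + x.2.length = n} =
      ∑ ij ∈ antidiagonal n, Nat.card {u // u ∈ S ∧ u.length = ij.1} *
        Nat.card {v // v ∈ T ∧ v.length = ij.2} := by
  rw [← Finset.sum_coe_sort]
  simp only [← Nat.card_prod, ← Nat.card_sigma]
  exact Nat.card_congr
    { toFun x := ⟨⟨(x.1.1.length, x.1.2.length), mem_antidiagonal.2 x.2.2⟩,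
        ⟨x.1.1, x.2.1.1, rfl⟩, ⟨x.1.2, x.2.1.2, rfl⟩⟩
      invFun y := ⟨(y.2.1.1, y.2.2.1), ⟨y.2.1.2.1, y.2.2.2.1⟩, by
        rw [y.2.1.2.2, y.2.2.2.2]; exact mem_antidiagonal.1 y.1.2⟩
      left_inv _ := rfl
      right_inv := by
        rintro ⟨⟨⟨i, j⟩, h⟩, ⟨u, hu, rfl : u.length = i⟩, ⟨v, hv, rfl : v.length = j⟩⟩
        rfl }

theorem lengthGF_image2 (g : List α → List α → List α) (k : ℕ)
    (hg : ∀ u v, (g u v).length = u.length + v.length + k)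
    (hinj : Set.InjOn (Function.uncurry g) (S ×ˢ T)) :
    lengthGF (Set.image2 g S T) = X ^ k * (lengthGF S * lengthGF T) := by
  ext m
  rw [coeff_X_pow_mul', lengthGF, coeff_mk]
  split_ifs with hkm
  · obtain ⟨n, rfl⟩ := Nat.exists_eq_add_of_le' hkm
    simp only [Nat.add_sub_cancel, coeff_mul, lengthGF, coeff_mk, ← Nat.cast_mul, ← Nat.cast_sum,
      ← card_mem_prod_length_add, Nat.cast_inj]
    symm
    refine Nat.card_eq_of_bijective
      (fun x => ⟨g x.1.1 x.1.2, Set.mem_image2_of_mem x.2.1.1 x.2.1.2, by rw [hg, x.2.2]⟩)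
      ⟨fun x y hxy => Subtype.ext (hinj x.2.1 y.2.1 (congrArg Subtype.val hxy)), ?_⟩
    rintro ⟨_, ⟨u, hu, v, hv, rfl⟩, hl⟩
    exact ⟨⟨(u, v), ⟨hu, hv⟩, by simp only [hg] at hl ⊢; omega⟩, rfl⟩
  · have : IsEmpty {p // p ∈ Set.image2 g S T ∧ p.length = m} :=
      ⟨by rintro ⟨_, ⟨u, -, v, -, rfl⟩, hl⟩; rw [hg] at hl; omega⟩
    rw [Nat.card_of_isEmpty, Nat.cast_zero]

end LengthGF

section Ballot

theorem isBallot_nil : IsBallot [] := fun k => by simp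

theorem IsBallot.count_le {p : List Bool} (hp : IsBallot p) : p.count false ≤ p.count true := by
  simpa using hp p.length

theorem IsBallot.append {u v : List Bool} (hu : IsBallot u) (hv : IsBallot v) :
    IsBallot (u ++ v) := by
  intro k
  have := hu k
  have := hv (k - u.length)
  simp only [List.take_append, List.count_append]
  omega

theorem IsBallot.of_append {u v : List Bool} (h : IsBallot (u ++ v)) : IsBallot u := by
  intro k
  rcases le_total k u.length with hk | hk
  · simpa [List.take_append_of_le_length hk] using h k
  · simpa [List.take_of_length_le hk] using h u.length

theorem isBallot_append_singleton_iff {p : List Bool} {b : Bool} :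
    IsBallot (p ++ [b]) ↔ IsBallot p ∧ (p ++ [b]).count false ≤ (p ++ [b]).count true := by
  refine ⟨fun h => ⟨h.of_append, h.count_le⟩, fun ⟨hp, hcount⟩ k => ?_⟩
  rcases le_or_gt k p.length with hk | hk
  · simpa [List.take_append_of_le_length hk] using hp k
  · rwa [List.take_of_length_le (by simp; omega)]

theorem IsBallot.cons_true {v : List Bool} (hv : IsBallot v) : IsBallot (true :: v) :=
  IsBallot.append (u := [true]) (fun k => by cases k <;> simp) hv

theorem not_isDyck_append_true_cons {u s t : List Bool} (hu : IsDyck u)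
    (hst : IsBallot (s ++ t)) : ¬ IsDyck (u ++ true :: s) := by
  rintro ⟨-, hcount⟩
  have := hst.of_append.count_le
  have := hu.2
  simp at hcount
  omega

theorem IsBallot.eq_append_true_cons {p : List Bool} (hp : IsBallot p) (hnd : ¬ IsDyck p) :
    ∃ u v, IsDyck u ∧ IsBallot v ∧ p = u ++ true :: v := by
  induction p using List.reverseRecOn with
  | nil => exact absurd ⟨isBallot_nil, rfl⟩ hnd
  | append_singleton q b ih =>
    have hq := hp.of_append
    have hcount := hp.count_le
    by_cases hqd : IsDyck q
    · cases b
      · have := hqd.2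
        simp at hcount
        omega
      · exact ⟨q, [], hqd, isBallot_nil, rfl⟩
    · obtain ⟨u, v, hu, hv, rfl⟩ := ih hq hqd
      refine ⟨u, v ++ [b], hu, isBallot_append_singleton_iff.2 ⟨hv, ?_⟩, by simp⟩
      have hne := fun h => hnd ⟨hp, h⟩
      have := hu.2
      simp at hcount hne ⊢
      omega

theorem IsDyck.append_true_cons {u v : List Bool} (hu : IsDyck u) (hv : IsBallot v) :
    IsBallot (u ++ true :: v) :=
  hu.1.append hv.cons_true

theorem eq_of_dyck_append_true_cons_eq {u v u' v' : List Bool} (hu : IsDyck u) (hv : IsBallot v)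
    (hu' : IsDyck u') (hv' : IsBallot v') (h : u ++ true :: v = u' ++ true :: v') :
    u = u' ∧ v = v' := by
  rcases List.append_eq_append_iff.1 h with ⟨_ | ⟨b, s⟩, rfl, hs⟩ | ⟨_ | ⟨b, s⟩, rfl, hs⟩
  · simpa using hs
  · obtain ⟨rfl, rfl⟩ := List.cons_eq_cons.1 hs
    exact absurd hu' (not_isDyck_append_true_cons hu hv)
  · simpa using hs.symm
  · obtain ⟨rfl, rfl⟩ := List.cons_eq_cons.1 hs
    exact absurd hu (not_isDyck_append_true_cons hu' hv')

theorem IsDyck.append_true_cons_append_false {u w : List Bool} (hu : IsDyck u)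
    (hw : IsDyck w) : IsDyck (u ++ true :: (w ++ [false])) := by
  refine ⟨hu.1.append ?_, ?_⟩
  · rw [← List.cons_append]
    refine isBallot_append_singleton_iff.2 ⟨hw.1.cons_true, ?_⟩
    have := hw.2
    simp
    omega
  · have := hu.2
    have := hw.2
    simp
    omega

theorem IsDyck.eq_nil_or_eq_append_true_cons_append_false {p : List Bool} (hp : IsDyck p) :
    p = [] ∨ ∃ u w, IsDyck u ∧ IsDyck w ∧ p = u ++ true :: (w ++ [false]) := by
  induction p using List.reverseRecOn with
  | nil => exact Or.inl rfl
  | append_singleton q b _ =>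
    right
    have hq := hp.1.of_append
    have hcount := hp.2
    have hqd : ¬ IsDyck q := fun hqd => by
      have := hqd.2
      cases b <;> simp at hcount <;> omega
    obtain ⟨u, w, hu, hw, rfl⟩ := hq.eq_append_true_cons hqd
    have := hu.2
    have := hw.count_le
    cases b
    · refine ⟨u, w, hu, ⟨hw, ?_⟩, by simp⟩
      simp at hcount
      omega
    · simp at hcount
      omega

theorem IsDyck.of_append {u v : List Bool} (h : IsDyck (u ++ v)) (hv : IsDyck v) : IsDyck u :=
  ⟨h.1.of_append, by have h2 := h.2; have := hv.2; simp only [List.count_append] at h2; omega⟩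

theorem eq_of_dyck_append_true_cons_append_false_eq {u w u' w' : List Bool} (hu : IsDyck u)
    (hw : IsDyck w) (hu' : IsDyck u') (hw' : IsDyck w')
    (h : u ++ true :: (w ++ [false]) = u' ++ true :: (w' ++ [false])) : u = u' ∧ w = w' :=
  eq_of_dyck_append_true_cons_eq hu hw.1 hu' hw'.1
    (List.append_cancel_right (bs := [false]) (by simpa using h))

end Ballot

section NoIsolatedDown

def NoIsolatedDown (p : List Bool) : Prop :=
  ∀ u v, p = u ++ false :: v → u.getLast? = some false ∨ v.head? = some false

theorem noIsolatedDown_nil : NoIsolatedDown [] := fun u v h => by simp at h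

theorem noIsolatedDown_false_false : NoIsolatedDown [false, false] := by
  intro u v h
  rcases u with _ | ⟨a, _ | ⟨b, u⟩⟩ <;> simp at h
  · simp [← h]
  · simp [h.1]

theorem not_noIsolatedDown_false : ¬ NoIsolatedDown [false] := by
  intro h
  simpa using h [] [] rfl

theorem noIsolatedDown_append_true_cons {u v : List Bool} :
    NoIsolatedDown (u ++ true :: v) ↔ NoIsolatedDown u ∧ NoIsolatedDown v := by
  constructor
  · intro h
    refine ⟨fun a b hab => ?_, fun a b hab => ?_⟩
    · rcases h a (b ++ true :: v) (by simp [hab]) with h | h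
      · exact Or.inl h
      · cases b <;> simp_all
    · rcases h (u ++ true :: a) b (by simp [hab]) with h | h
      · left
        rcases List.eq_nil_or_concat a with rfl | ⟨a, x, rfl⟩ <;> simp_all [List.getLast?_cons]
      · exact Or.inr h
  · rintro ⟨hu, hv⟩ a b h
    rcases List.append_eq_append_iff.1 h with ⟨_ | ⟨c, s⟩, rfl, hs⟩ | ⟨_ | ⟨c, s⟩, rfl, hs⟩
    · simp at hs
    · obtain ⟨rfl, rfl⟩ := List.cons_eq_cons.1 hs
      rcases hv s b rfl with h | h
      · left
        rcases List.eq_nil_or_concat s with rfl | ⟨s, x, rfl⟩ <;> simp_all [List.getLast?_cons]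
      · exact Or.inr h
    · simp at hs
    · obtain ⟨rfl, rfl⟩ := List.cons_eq_cons.1 hs
      rcases hu a s rfl with h | h
      · exact Or.inl h
      · cases s <;> simp_all

theorem NoIsolatedDown.append_false {q : List Bool} (h : NoIsolatedDown (q ++ [false])) :
    NoIsolatedDown (q ++ [false, false]) := by
  intro a b hab
  rcases List.eq_nil_or_concat b with rfl | ⟨b, c, rfl⟩
  · left
    have : q ++ [false] = a := List.append_cancel_right (by simpa using hab)
    simp [← this]
  · have hab' : (q ++ [false]) ++ [false] = (a ++ false :: b) ++ [c] := by simpa using hab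
    obtain ⟨hqa, -⟩ := List.append_inj' hab' rfl
    rcases h a b hqa with h | h
    · exact Or.inl h
    · cases b <;> simp_all

theorem NoIsolatedDown.eq_append_true_false {w : List Bool}
    (h : NoIsolatedDown (w ++ [false])) (hw : ¬ NoIsolatedDown w) :
    w = [false] ∨ ∃ v, w = v ++ [true, false] ∧ NoIsolatedDown v := by
  simp only [NoIsolatedDown, not_forall, not_or] at hw
  obtain ⟨a, b, rfl, ha, hb⟩ := hw
  obtain rfl : b = [] := by
    rcases h a (b ++ [false]) (by simp) with h | h
    · exact absurd h ha
    · cases b <;> simp_all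
  rcases List.eq_nil_or_concat a with rfl | ⟨v, x, rfl⟩
  · exact Or.inl rfl
  · obtain rfl : x = true := by simpa using ha
    refine Or.inr ⟨v, by simp, (noIsolatedDown_append_true_cons.1 (by simpa using h)).1⟩

theorem noIsolatedDown_iff_getElem? {p : List Bool} : NoIsolatedDown p ↔
    ∀ i, p[i]? = some false → p[i + 1]? = some false ∨ (i ≠ 0 ∧ p[i - 1]? = some false) := by
  constructor
  · intro h i hi
    obtain ⟨hlt, hpi⟩ := List.getElem?_eq_some_iff.1 hi
    have hp : p = p.take i ++ false :: p.drop (i + 1) := by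
      conv_lhs => rw [← List.take_append_drop i p, List.drop_eq_getElem_cons hlt, hpi]
    rcases h _ _ hp with h | h
    · right
      rw [List.getLast?_take] at h
      split_ifs at h with hi0
      rw [List.getElem?_eq_getElem (show i - 1 < p.length by omega), Option.some_or] at h
      rw [List.getElem?_eq_getElem (show i - 1 < p.length by omega)]
      exact ⟨hi0, h⟩
    · left
      rwa [List.head?_drop] at h
  · rintro h a b rfl
    rcases h a.length (by simp) with h | ⟨ha, h⟩
    · right
      rw [List.getElem?_append_right (by simp)] at h
      simpa [List.head?_eq_getElem?] using h
    · left
      rw [List.getElem?_append_left (by omega)] at h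
      rwa [List.getLast?_eq_getElem?]

end NoIsolatedDown

section CanonicalRep

def DDAt (p : List Bool) (i : ℕ) : Prop := p[i]? = some false ∧ p[i + 1]? = some false

instance (p : List Bool) (i : ℕ) : Decidable (DDAt p i) := inferInstanceAs (Decidable (_ ∧ _))

theorem occursAt_false_false_iff {p : List Bool} {i : ℕ} :
    OccursAt [false, false] p i ↔ DDAt p i := by
  have h0 : p[i]? = (p.drop i)[0]? := by simp
  have h1 : p[i + 1]? = (p.drop i)[1]? := by simp
  rw [OccursAt, DDAt, h0, h1]
  rcases p.drop i with _ | ⟨x, _ | ⟨y, r⟩⟩ <;> simp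

/-- The representative of a `DD`-equivalence class: a step is `D` exactly when it lies in an
occurrence of `DD`. -/
def canonicalRep (p : List Bool) : List Bool :=
  (List.range p.length).map fun j => !decide (DDAt p j ∨ (j ≠ 0 ∧ DDAt p (j - 1)))

theorem length_canonicalRep (p : List Bool) : (canonicalRep p).length = p.length := by
  simp [canonicalRep]

theorem canonicalRep_getElem?_eq_some_false {p : List Bool} {j : ℕ} :
    (canonicalRep p)[j]? = some false ↔ DDAt p j ∨ (j ≠ 0 ∧ DDAt p (j - 1)) := by
  rcases lt_or_ge j p.length with hj | hj
  · simp [canonicalRep, List.getElem?_range hj, or_iff_not_imp_left]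
  · have h1 : p[j]? = none := List.getElem?_eq_none hj
    have h2 : p[j - 1 + 1]? = none := List.getElem?_eq_none (by omega)
    simp [canonicalRep, List.getElem?_eq_none (l := List.range _) (by simpa using hj), DDAt, h1, h2]

theorem getElem?_eq_some_false_of_ddAt {p : List Bool} {j : ℕ}
    (h : DDAt p j ∨ (j ≠ 0 ∧ DDAt p (j - 1))) : p[j]? = some false := by
  rcases h with h | ⟨hj, h⟩
  · exact h.1
  · simpa [Nat.sub_add_cancel (Nat.one_le_iff_ne_zero.2 hj)] using h.2

theorem ddAt_canonicalRep_iff {p : List Bool} {i : ℕ} : DDAt (canonicalRep p) i ↔ DDAt p i := by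
  simp only [DDAt, canonicalRep_getElem?_eq_some_false]
  refine ⟨fun ⟨hi, hi1⟩ => ?_, fun h => ⟨Or.inl h, Or.inr ⟨by omega, by simpa using h⟩⟩⟩
  rcases hi1 with hi1 | ⟨-, hi1⟩
  · exact ⟨(getElem?_eq_some_false_of_ddAt hi), hi1.1⟩
  · simpa using hi1

theorem noIsolatedDown_canonicalRep (p : List Bool) : NoIsolatedDown (canonicalRep p) := by
  refine noIsolatedDown_iff_getElem?.2 fun i hi => ?_
  simp only [canonicalRep_getElem?_eq_some_false] at hi ⊢
  rcases hi with hi | ⟨hi0, hi⟩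
  · exact Or.inl (Or.inr ⟨by omega, by simpa using hi⟩)
  · exact Or.inr ⟨hi0, Or.inl hi⟩

theorem eq_of_getElem?_eq_some_false_iff {p q : List Bool} (hl : p.length = q.length)
    (h : ∀ j : ℕ, p[j]? = some false ↔ q[j]? = some false) : p = q := by
  refine List.ext_getElem hl fun j hp hq => ?_
  have := h j
  rw [List.getElem?_eq_getElem hp, List.getElem?_eq_getElem hq] at this
  revert this
  cases p[j] <;> cases q[j] <;> simp

theorem canonicalRep_eq_self {p : List Bool} (hp : NoIsolatedDown p) : canonicalRep p = p := by
  refine eq_of_getElem?_eq_some_false_iff (length_canonicalRep p) fun j => ?_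
  rw [canonicalRep_getElem?_eq_some_false]
  refine ⟨getElem?_eq_some_false_of_ddAt, fun hj => ?_⟩
  rcases noIsolatedDown_iff_getElem?.1 hp j hj with h | ⟨hj0, h⟩
  · exact Or.inl ⟨hj, h⟩
  · exact Or.inr ⟨hj0, h, by rwa [Nat.sub_add_cancel (Nat.one_le_iff_ne_zero.2 hj0)]⟩

theorem pathEquiv_canonicalRep (p : List Bool) : PathEquiv [false, false] p (canonicalRep p) :=
  ⟨(length_canonicalRep p).symm, fun i => by
    rw [occursAt_false_false_iff, occursAt_false_false_iff, ddAt_canonicalRep_iff]⟩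

theorem canonicalRep_eq_of_pathEquiv {p q : List Bool} (h : PathEquiv [false, false] p q) :
    canonicalRep p = canonicalRep q := by
  have hdd : ∀ i, DDAt p i ↔ DDAt q i := fun i => by
    rw [← occursAt_false_false_iff, ← occursAt_false_false_iff]
    exact h.2 i
  simp only [canonicalRep, h.1, hdd]

theorem IsBallot.of_forall₂_le {p q : List Bool} (h : List.Forall₂ (· ≤ ·) p q)
    (hp : IsBallot p) : IsBallot q := by
  have hcount : ∀ {a b : List Bool}, List.Forall₂ (· ≤ ·) a b →
      b.count false + a.count true ≤ a.count false + b.count true := by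
    intro a b hab
    induction hab with
    | nil => simp
    | @cons x y _ _ hxy _ ih => cases x <;> cases y <;> simp [Bool.le_iff_imp] at hxy ⊢ <;> omega
  intro k
  have := hp k
  have := hcount (List.forall₂_take k h)
  omega

theorem forall₂_le_canonicalRep (p : List Bool) : List.Forall₂ (· ≤ ·) p (canonicalRep p) := by
  refine List.forall₂_iff_get.2 ⟨(length_canonicalRep p).symm, fun j hp hq => ?_⟩
  simp only [List.get_eq_getElem]
  cases hc : (canonicalRep p)[j]
  · have := getElem?_eq_some_false_of_ddAt
      (canonicalRep_getElem?_eq_some_false.1 (by rw [List.getElem?_eq_getElem hq, hc]))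
    rw [List.getElem?_eq_getElem hp, Option.some_inj] at this
    rw [this]
  · exact Bool.le_true _

end CanonicalRep

section Decomposition

def ballotNoIsolatedDown : Set (List Bool) := {p | IsBallot p ∧ NoIsolatedDown p}

def dyckNoIsolatedDown : Set (List Bool) := {p | IsDyck p ∧ NoIsolatedDown p}

def dyckNoIsolatedDownSnoc : Set (List Bool) := {p | IsDyck p ∧ NoIsolatedDown (p ++ [false])}

theorem numBallotClasses_eq_card (n : ℕ) : numBallotClasses [false, false] n =
    Nat.card {p // p ∈ ballotNoIsolatedDown ∧ p.length = n} := by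
  refine (Nat.card_eq_of_bijective
    (fun p => Quotient.mk (ballotSetoid [false, false] n) ⟨p.1, p.2.1.1, p.2.2⟩) ⟨?_, ?_⟩).symm
  · rintro ⟨p, ⟨_, hp⟩, _⟩ ⟨q, ⟨_, hq⟩, _⟩ h
    have := canonicalRep_eq_of_pathEquiv (Quotient.exact h)
    rw [canonicalRep_eq_self hp, canonicalRep_eq_self hq] at this
    exact Subtype.ext this
  · rintro ⟨p, hp, hn⟩
    refine ⟨⟨canonicalRep p, ⟨hp.of_forall₂_le (forall₂_le_canonicalRep p),
      noIsolatedDown_canonicalRep p⟩, (length_canonicalRep p).trans hn⟩, Quotient.sound ?_⟩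
    have h := pathEquiv_canonicalRep p
    exact ⟨h.1.symm, fun i => (h.2 i).symm⟩

theorem ballotNoIsolatedDown_eq : ballotNoIsolatedDown = dyckNoIsolatedDown ∪
    Set.image2 (fun u v => u ++ true :: v) dyckNoIsolatedDown ballotNoIsolatedDown := by
  ext p
  constructor
  · rintro ⟨hb, hni⟩
    by_cases hd : IsDyck p
    · exact Or.inl ⟨hd, hni⟩
    · obtain ⟨u, v, hu, hv, rfl⟩ := hb.eq_append_true_cons hd
      obtain ⟨hnu, hnv⟩ := noIsolatedDown_append_true_cons.1 hni
      exact Or.inr ⟨u, ⟨hu, hnu⟩, v, ⟨hv, hnv⟩, rfl⟩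
  · rintro (⟨hd, hni⟩ | ⟨u, ⟨hu, hnu⟩, v, ⟨hv, hnv⟩, rfl⟩)
    · exact ⟨hd.1, hni⟩
    · exact ⟨hu.append_true_cons hv, noIsolatedDown_append_true_cons.2 ⟨hnu, hnv⟩⟩

theorem dyckNoIsolatedDown_eq : dyckNoIsolatedDown = {[]} ∪
    Set.image2 (fun u w => u ++ true :: (w ++ [false])) dyckNoIsolatedDown
      dyckNoIsolatedDownSnoc := by
  ext p
  constructor
  · rintro ⟨hd, hni⟩
    rcases hd.eq_nil_or_eq_append_true_cons_append_false with rfl | ⟨u, w, hu, hw, rfl⟩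
    · exact Or.inl rfl
    · obtain ⟨hnu, hnw⟩ := noIsolatedDown_append_true_cons.1 hni
      exact Or.inr ⟨u, ⟨hu, hnu⟩, w, ⟨hw, hnw⟩, rfl⟩
  · rintro (rfl | ⟨u, ⟨hu, hnu⟩, w, ⟨hw, hnw⟩, rfl⟩)
    · exact ⟨⟨isBallot_nil, rfl⟩, noIsolatedDown_nil⟩
    · exact ⟨hu.append_true_cons_append_false hw,
        noIsolatedDown_append_true_cons.2 ⟨hnu, hnw⟩⟩

theorem dyckNoIsolatedDownSnoc_eq : dyckNoIsolatedDownSnoc =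
    Set.image2 (fun u w => u ++ true :: (w ++ [false])) dyckNoIsolatedDown
      (dyckNoIsolatedDownSnoc ∪ {[]}) := by
  rw [Set.image2_union_right]
  ext p
  constructor
  · rintro ⟨hd, hni⟩
    by_cases hnp : NoIsolatedDown p
    · have hp : p ∈ dyckNoIsolatedDown := ⟨hd, hnp⟩
      rw [dyckNoIsolatedDown_eq] at hp
      rcases hp with rfl | hp
      · exact absurd hni not_noIsolatedDown_false
      · exact Or.inl hp
    · rcases hni.eq_append_true_false hnp with rfl | ⟨v, rfl, hv⟩
      · simp [IsDyck] at hd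
      · have hTF : IsDyck [true, false] := by
          simpa using IsDyck.append_true_cons_append_false (u := []) (w := [])
            ⟨isBallot_nil, rfl⟩ ⟨isBallot_nil, rfl⟩
        exact Or.inr ⟨v, ⟨hd.of_append hTF, hv⟩, [], rfl, by simp⟩
  · rintro (⟨u, ⟨hu, hnu⟩, w, ⟨hw, hnw⟩, rfl⟩ | ⟨u, ⟨hu, hnu⟩, _, rfl, rfl⟩)
    · refine ⟨hu.append_true_cons_append_false hw, ?_⟩
      simpa using noIsolatedDown_append_true_cons.2 ⟨hnu, hnw.append_false⟩
    · refine ⟨hu.append_true_cons_append_false ⟨isBallot_nil, rfl⟩, ?_⟩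
      simpa using noIsolatedDown_append_true_cons.2 ⟨hnu, noIsolatedDown_false_false⟩

end Decomposition

section GeneratingFunctions

theorem lengthGF_ballotNoIsolatedDown :
    lengthGF ballotNoIsolatedDown = lengthGF dyckNoIsolatedDown +
      X * (lengthGF dyckNoIsolatedDown * lengthGF ballotNoIsolatedDown) := by
  conv_lhs => rw [ballotNoIsolatedDown_eq]
  rw [lengthGF_union, lengthGF_image2 _ 1 (fun u v => by simp [Nat.add_assoc]), pow_one]
  · rintro ⟨u, v⟩ ⟨hu, hv⟩ ⟨u', v'⟩ ⟨hu', hv'⟩ h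
    obtain ⟨rfl, rfl⟩ := eq_of_dyck_append_true_cons_eq hu.1 hv.1 hu'.1 hv'.1 h
    rfl
  · refine Set.disjoint_left.2 ?_
    rintro _ ⟨hd, -⟩ ⟨u, ⟨hu, -⟩, v, ⟨hv, -⟩, rfl⟩
    exact not_isDyck_append_true_cons hu (t := []) (by simpa using hv) hd

theorem injOn_dyck_append_true_cons_append_false {S T : Set (List Bool)}
    (hS : ∀ u ∈ S, IsDyck u) (hT : ∀ w ∈ T, IsDyck w) :
    Set.InjOn (Function.uncurry fun u w => u ++ true :: (w ++ [false])) (S ×ˢ T) := by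
  rintro ⟨u, w⟩ ⟨hu, hw⟩ ⟨u', w'⟩ ⟨hu', hw'⟩ h
  obtain ⟨rfl, rfl⟩ :=
    eq_of_dyck_append_true_cons_append_false_eq (hS u hu) (hT w hw) (hS u' hu') (hT w' hw') h
  rfl

theorem lengthGF_dyckNoIsolatedDown : lengthGF dyckNoIsolatedDown =
    1 + X ^ 2 * (lengthGF dyckNoIsolatedDown * lengthGF dyckNoIsolatedDownSnoc) := by
  conv_lhs => rw [dyckNoIsolatedDown_eq]
  rw [lengthGF_union, lengthGF_image2 _ 2 (fun u v => by simp [Nat.add_assoc]),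
    lengthGF_singleton_nil]
  · exact injOn_dyck_append_true_cons_append_false (fun _ h => h.1) (fun _ h => h.1)
  · simp

theorem lengthGF_dyckNoIsolatedDownSnoc : lengthGF dyckNoIsolatedDownSnoc =
    X ^ 2 * (lengthGF dyckNoIsolatedDown * (lengthGF dyckNoIsolatedDownSnoc + 1)) := by
  have hnil : Disjoint dyckNoIsolatedDownSnoc {[]} :=
    Set.disjoint_singleton_right.2 fun h => not_noIsolatedDown_false h.2
  conv_lhs => rw [dyckNoIsolatedDownSnoc_eq]
  rw [lengthGF_image2 _ 2 (fun u v => by simp [Nat.add_assoc]), lengthGF_union hnil,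
    lengthGF_singleton_nil]
  refine injOn_dyck_append_true_cons_append_false (fun _ h => h.1) ?_
  rintro w (hw | rfl)
  exacts [hw.1, ⟨isBallot_nil, rfl⟩]

end GeneratingFunctions

theorem PowerSeries.eq_of_one_add_mul_eq_mul_one_add_sq {R : Type*} [CommRing R]
    {a F G : R⟦X⟧} (ha : constantCoeff a = 0) (hF : (1 + a) * F = a * (1 + F) ^ 2)
    (hG : (1 + a) * G = a * (1 + G) ^ 2) : F = G := by
  have hunit : IsUnit (1 - a * (1 + F + G)) := by
    simp [isUnit_iff_constantCoeff, ha]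
  rw [← sub_eq_zero, ← hunit.mul_left_eq_zero]
  linear_combination hF - hG

open PowerSeries in
/-- the generating function of the numbers of DD-equivalence classes of
ballot paths satisfies `A(x) (1 - x + x^2 - x^3 M(x^2)) = 1 + x^2 M(x^2)`, where `M`
is the Motzkin generating function and `N = M(x^2)` its substitution at `x^2`. -/
theorem dd_classes_gf (M N : PowerSeries ℚ)
    (hM : M = 1 + X * M + X ^ 2 * M ^ 2)
    (hN : ∀ n : ℕ, (coeff n) N = if 2 ∣ n then (coeff (n / 2)) M else 0) :
    (PowerSeries.mk fun n => (numBallotClasses [false, false] n : ℚ)) *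
      (1 - X + X ^ 2 - X ^ 3 * N) = 1 + X ^ 2 * N := by
  have hN_expand : N = expand 2 two_ne_zero M := by
    ext n
    rw [hN, coeff_expand]
  have hNM : N = 1 + X ^ 2 * N + X ^ 4 * N ^ 2 := by
    have := congrArg (expand 2 two_ne_zero) hM
    simp only [map_add, map_mul, map_pow, map_one, expand_X, ← hN_expand] at this
    linear_combination this
  have hA : (mk fun n => (numBallotClasses [false, false] n : ℚ)) =
      lengthGF ballotNoIsolatedDown := by
    ext n
    simp [lengthGF, numBallotClasses_eq_card]
  have eA := lengthGF_ballotNoIsolatedDown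
  have eD := lengthGF_dyckNoIsolatedDown
  have eW := lengthGF_dyckNoIsolatedDownSnoc
  set A := lengthGF ballotNoIsolatedDown
  set W := lengthGF dyckNoIsolatedDownSnoc
  have hW : X ^ 2 * N = W := by
    refine eq_of_one_add_mul_eq_mul_one_add_sq (a := X ^ 2) (by simp) ?_ ?_
    · linear_combination X ^ 2 * hNM
    · linear_combination (1 - X ^ 2 * W) * eW + X ^ 2 * (1 + W) * eD
  rw [hA]
  linear_combination (1 + X ^ 2) * eA - (X * A + 1) * (eW - eD) - (X * A + 1) * hW
end

section
/- Let c_n denote the number of DUU-equivalence classes of ballot paths of length n, and let d_n denote the number of UUD-equivalence classes of ballot paths of length n. Then c₁ = c₂ = c₃ = 1, c_{n+3} = c_{n+2} + c_n for every n ≥ 1, and moreover c_{n+1} = d_n for every n ≥ 3. -/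
/-! ### Auxiliary development -/

namespace DUUAux

lemma lt_of_get {w : List Bool} {i : ℕ} {b : Bool} (h : w[i]? = some b) : i < w.length := by
  rcases List.getElem?_eq_some_iff.mp h with ⟨h', _⟩; exact h'

lemma occ3_iff (a b c : Bool) (p : List Bool) (i : ℕ) :
    OccursAt [a, b, c] p i ↔ (p[i]? = some a ∧ p[i+1]? = some b ∧ p[i+2]? = some c) := by
  constructor
  · intro h
    unfold OccursAt at h
    refine ⟨?_, ?_, ?_⟩
    · have := congrArg (fun l => l[0]?) h
      simpa [List.getElem?_take, List.getElem?_drop] using this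
    · have := congrArg (fun l => l[1]?) h
      simpa [List.getElem?_take, List.getElem?_drop] using this
    · have := congrArg (fun l => l[2]?) h
      simpa [List.getElem?_take, List.getElem?_drop] using this
  · rintro ⟨h0, h1, h2⟩
    unfold OccursAt
    apply List.ext_getElem?
    intro j
    match j with
    | 0 => simpa [List.getElem?_take, List.getElem?_drop] using h0
    | 1 => simpa [List.getElem?_take, List.getElem?_drop] using h1
    | 2 => simpa [List.getElem?_take, List.getElem?_drop] using h2
    | (j+3) => simp [List.getElem?_take]

/-- Boolean test for an occurrence of DUU at position `i`. -/
def occD (p : List Bool) (i : ℕ) : Bool :=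
  (p[i]? == some false) && (p[i+1]? == some true) && (p[i+2]? == some true)

/-- Boolean test for an occurrence of UUD at position `i`. -/
def occU (p : List Bool) (i : ℕ) : Bool :=
  (p[i]? == some true) && (p[i+1]? == some true) && (p[i+2]? == some false)

lemma occD_iff (p : List Bool) (i : ℕ) :
    OccursAt [false, true, true] p i ↔ occD p i = true := by
  rw [occ3_iff]; simp [occD, and_assoc]

lemma occU_iff (p : List Bool) (i : ℕ) :
    OccursAt [true, true, false] p i ↔ occU p i = true := by
  rw [occ3_iff]; simp [occU, and_assoc]

lemma occD_elim {p : List Bool} {i : ℕ} (h : occD p i = true) :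
    p[i]? = some false ∧ p[i+1]? = some true ∧ p[i+2]? = some true := by
  simpa [occD, and_assoc] using h

lemma occU_elim {p : List Bool} {i : ℕ} (h : occU p i = true) :
    p[i]? = some true ∧ p[i+1]? = some true ∧ p[i+2]? = some false := by
  simpa [occU, and_assoc] using h

lemma occD_succ {p : List Bool} {i : ℕ} (h : occD p i = true) :
    occD p (i+1) = false ∧ occD p (i+2) = false := by
  obtain ⟨h0, h1, h2⟩ := occD_elim h
  constructor
  · cases hc : occD p (i+1) with
    | false => rfl
    | true =>
      obtain ⟨g0, _, _⟩ := occD_elim hc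
      rw [h1] at g0; simp at g0
  · cases hc : occD p (i+2) with
    | false => rfl
    | true =>
      obtain ⟨g0, _, _⟩ := occD_elim hc
      rw [h2] at g0; simp at g0

lemma occU_succ {p : List Bool} {i : ℕ} (h : occU p i = true) :
    occU p (i+1) = false ∧ occU p (i+2) = false := by
  obtain ⟨h0, h1, h2⟩ := occU_elim h
  constructor
  · cases hc : occU p (i+1) with
    | false => rfl
    | true =>
      obtain ⟨_, g1, _⟩ := occU_elim hc
      rw [h2] at g1; simp at g1
  · cases hc : occU p (i+2) with
    | false => rfl
    | true =>
      obtain ⟨g0, _, _⟩ := occU_elim hc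
      rw [h2] at g0; simp at g0

lemma occD_zero {p : List Bool} (hp : IsBallot p) : occD p 0 = false := by
  cases hc : occD p 0 with
  | false => rfl
  | true =>
    obtain ⟨h0, _, _⟩ := occD_elim hc
    rcases p with _ | ⟨a, t⟩
    · simp at h0
    · simp at h0
      subst h0
      have := hp 1
      simp at this

/-- A word whose first letter is not D and which has no two adjacent D's is a ballot path. -/
lemma isBallot_of (p : List Bool) (h0 : p[0]? ≠ some false)
    (hadj : ∀ k, p[k]? = some false → p[k+1]? ≠ some false) : IsBallot p := by
  have key : ∀ k, ((p.take k).count false ≤ (p.take k).count true) ∧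
      (p[k]? = some false → (p.take k).count false < (p.take k).count true) := by
    intro k
    induction k with
    | zero =>
      refine ⟨le_refl _, fun h => absurd h h0⟩
    | succ k ih =>
      cases hk : p[k]? with
      | none =>
        have hlen : p.length ≤ k := by
          by_contra hl
          push_neg at hl
          have : p[k]? = some p[k] := List.getElem?_eq_getElem hl
          rw [hk] at this; simp at this
        rw [List.take_succ, hk]
        simp only [Option.toList_none, List.append_nil]
        refine ⟨ih.1, fun h => ?_⟩
        have : p[k+1]? = none := List.getElem?_eq_none (by omega)
        rw [h] at this; simp at this
      | some b =>
        rw [List.take_succ, hk]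
        cases b with
        | true =>
          simp only [Option.toList_some, List.count_append]
          constructor
          · simp only [List.count_singleton]
            simp
            omega
          · intro _
            simp only [List.count_singleton]
            simp
            omega
        | false =>
          have hlt := ih.2 hk
          simp only [Option.toList_some, List.count_append]
          constructor
          · simp only [List.count_singleton]
            simp
            omega
          · intro h
            exact absurd h (hadj k hk)
  intro k
  exact (key k).1

/-- Sparsity condition for canonical DUU-words: every D is immediately followed by UU. -/
def SpD (w : List Bool) : Prop :=
  ∀ i, w[i]? = some false → w[i+1]? = some true ∧ w[i+2]? = some true

/-- Sparsity condition for canonical UUD-words: every D is immediately preceded by UU. -/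
def SpU (w : List Bool) : Prop :=
  ∀ j, w[j]? = some false → ∃ i, j = i + 2 ∧ w[i]? = some true ∧ w[i+1]? = some true

lemma spD_cons (a : Bool) (v : List Bool) :
    SpD (a :: v) ↔ ((a = false → v[0]? = some true ∧ v[1]? = some true) ∧ SpD v) := by
  constructor
  · intro h
    constructor
    · intro ha
      subst ha
      have := h 0 (by simp)
      simpa using this
    · intro i hi
      have := h (i+1) (by simpa using hi)
      simpa using this
  · rintro ⟨h0, h⟩ i hi
    cases i with
    | zero =>
      simp at hi
      subst hi
      simpa using h0 rfl
    | succ i =>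
      simp only [List.getElem?_cons_succ] at hi ⊢
      exact h i hi

lemma spD_cons_true (v : List Bool) : SpD (true :: v) ↔ SpD v := by
  simp [spD_cons]

lemma spD_cons_duu (v : List Bool) : SpD (false :: true :: true :: v) ↔ SpD v := by
  simp [spD_cons]

lemma spD_nil : SpD [] := by intro i hi; simp at hi

lemma isBallot_of_spD {w : List Bool} (h : SpD w) (h0 : w[0]? ≠ some false) : IsBallot w := by
  refine isBallot_of w h0 (fun k hk => ?_)
  rw [(h k hk).1]; simp

lemma isBallot_of_spU {w : List Bool} (h : SpU w) : IsBallot w := by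
  refine isBallot_of w ?_ ?_
  · intro h0
    obtain ⟨i, hi, _⟩ := h 0 h0
    omega
  · intro k hk hk1
    obtain ⟨i, hi, ht0, ht1⟩ := h (k+1) hk1
    have : i + 1 = k := by omega
    rw [this] at ht1
    rw [ht1] at hk; simp at hk

/-! ### The recursive family of finite sets counting canonical words -/

def E : ℕ → Finset (List Bool)
  | 0 => {[]}
  | 1 => {[true]}
  | 2 => {[true, true]}
  | (n+3) => ((E (n+2)).image (fun w => true :: w)) ∪
      ((E n).image (fun w => false :: true :: true :: w))

lemma mem_E : ∀ (m : ℕ) (w : List Bool), w ∈ E m ↔ (w.length = m ∧ SpD w) := by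
  intro m
  induction m using Nat.strong_induction_on with
  | _ m ih =>
    match m with
    | 0 =>
      intro w
      simp only [E, Finset.mem_singleton]
      constructor
      · rintro rfl; exact ⟨rfl, spD_nil⟩
      · rintro ⟨h, _⟩
        exact List.length_eq_zero_iff.mp h
    | 1 =>
      intro w
      simp only [E, Finset.mem_singleton]
      constructor
      · rintro rfl
        refine ⟨rfl, ?_⟩
        intro i hi
        match i with
        | 0 => simp at hi
        | (i+1) => simp at hi
      · rintro ⟨hl, hs⟩
        obtain ⟨b, rfl⟩ := List.length_eq_one_iff.mp hl
        cases b with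
        | true => rfl
        | false =>
          have := (hs 0 (by simp)).1
          simp at this
    | 2 =>
      intro w
      simp only [E, Finset.mem_singleton]
      constructor
      · rintro rfl
        refine ⟨rfl, ?_⟩
        intro i hi
        match i with
        | 0 => simp at hi
        | 1 => simp at hi
        | (i+2) => simp at hi
      · rintro ⟨hl, hs⟩
        match w with
        | [a, b] =>
          have ha : a = true := by
            cases a with
            | true => rfl
            | false =>
              have := (hs 0 (by simp)).2
              simp at this
          have hb : b = true := by
            cases b with
            | true => rfl
            | false =>
              have := (hs 1 (by simp)).1
              simp at this
          rw [ha, hb]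
    | (k+3) =>
      intro w
      have ih2 := ih (k+2) (by omega)
      have ih0 := ih k (by omega)
      simp only [E, Finset.mem_union, Finset.mem_image]
      constructor
      · rintro (⟨v, hv, rfl⟩ | ⟨v, hv, rfl⟩)
        · obtain ⟨hl, hs⟩ := (ih2 v).mp hv
          exact ⟨by simp [hl], (spD_cons_true v).mpr hs⟩
        · obtain ⟨hl, hs⟩ := (ih0 v).mp hv
          exact ⟨by simp [hl], (spD_cons_duu v).mpr hs⟩
      · rintro ⟨hl, hs⟩
        match w with
        | (a :: u) =>
          cases a with
          | true =>
            left
            refine ⟨u, (ih2 u).mpr ⟨by simpa using hl, (spD_cons_true u).mp hs⟩, rfl⟩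
          | false =>
            right
            have h01 := hs 0 (by simp)
            match u, h01 with
            | (b :: c :: v), ⟨hb, hc⟩ =>
              simp at hb hc
              subst hb; subst hc
              refine ⟨v, (ih0 v).mpr ⟨by simpa using hl, (spD_cons_duu v).mp hs⟩, rfl⟩

lemma card_E_rec (n : ℕ) : (E (n+3)).card = (E (n+2)).card + (E n).card := by
  have hdisj : Disjoint ((E (n+2)).image (fun w => true :: w))
      ((E n).image (fun w => false :: true :: true :: w)) := by
    rw [Finset.disjoint_left]
    rintro x hx hy
    obtain ⟨v, _, rfl⟩ := Finset.mem_image.mp hx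
    obtain ⟨u, _, h⟩ := Finset.mem_image.mp hy
    simp at h
  show (((E (n+2)).image (fun w => true :: w)) ∪
      ((E n).image (fun w => false :: true :: true :: w))).card = _
  rw [Finset.card_union_of_disjoint hdisj,
    Finset.card_image_of_injective _ (fun a b h => by simpa using h),
    Finset.card_image_of_injective _ (fun a b h => by simpa using h)]

/-! ### Canonical word for DUU -/

def canD (p : List Bool) : List Bool :=
  (List.range p.length).map (fun i => !occD p i)

lemma canD_length (p : List Bool) : (canD p).length = p.length := by simp [canD]

lemma canD_getElem? (p : List Bool) (i : ℕ) :
    (canD p)[i]? = if i < p.length then some (!occD p i) else none := by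
  rcases Nat.lt_or_ge i p.length with h | h
  · rw [if_pos h]
    simp [canD, List.getElem?_map, List.getElem?_range h]
  · rw [if_neg (by omega)]
    exact List.getElem?_eq_none (by simpa [canD] using h)

lemma occD_canD {p : List Bool} (hp : IsBallot p) (i : ℕ) :
    occD (canD p) i = occD p i := by
  cases h : occD p i with
  | true =>
    obtain ⟨h0, h1, h2⟩ := occD_elim h
    have hi2 : i + 2 < p.length := lt_of_get h2
    obtain ⟨o1, o2⟩ := occD_succ h
    have e0 : (canD p)[i]? = some false := by
      rw [canD_getElem?, if_pos (by omega), h]; rfl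
    have e1 : (canD p)[i+1]? = some true := by
      rw [canD_getElem?, if_pos (by omega), o1]; rfl
    have e2 : (canD p)[i+2]? = some true := by
      rw [canD_getElem?, if_pos (by omega), o2]; rfl
    simp [occD, e0, e1, e2]
  | false =>
    cases hc : occD (canD p) i with
    | false => rfl
    | true =>
      obtain ⟨g0, _, _⟩ := occD_elim hc
      rw [canD_getElem?] at g0
      split at g0
      · simp at g0
        rw [g0] at h; simp at h
      · simp at g0

lemma spD_canD {p : List Bool} (hp : IsBallot p) : SpD (canD p) := by
  intro i hi
  rw [canD_getElem?] at hi
  split at hi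
  case isFalse => simp at hi
  case isTrue hlt =>
    simp at hi
    have hocc : occD p i = true := hi
    obtain ⟨h0, h1, h2⟩ := occD_elim hocc
    have hi2 : i + 2 < p.length := lt_of_get h2
    obtain ⟨o1, o2⟩ := occD_succ hocc
    constructor
    · rw [canD_getElem?, if_pos (by omega), o1]; rfl
    · rw [canD_getElem?, if_pos (by omega), o2]; rfl

lemma canD_head {p : List Bool} (hp : IsBallot p) : (canD p)[0]? ≠ some false := by
  rw [canD_getElem?]
  split
  · rw [occD_zero hp]; simp
  · simp

lemma canD_eq_self {w : List Bool} (h : SpD w) : canD w = w := by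
  apply List.ext_getElem?
  intro i
  rw [canD_getElem?]
  rcases Nat.lt_or_ge i w.length with hi | hi
  · rw [if_pos hi]
    have hw : w[i]? = some w[i] := List.getElem?_eq_getElem hi
    cases hb : w[i] with
    | false =>
      rw [hb] at hw
      obtain ⟨h1, h2⟩ := h i hw
      have : occD w i = true := by simp [occD, hw, h1, h2]
      rw [this, hw]
      rfl
    | true =>
      rw [hb] at hw
      have : occD w i = false := by simp [occD, hw]
      rw [this, hw]
      rfl
  · rw [if_neg (by omega)]
    exact (List.getElem?_eq_none hi).symm

lemma canD_congr {p q : List Bool} (h : PathEquiv [false, true, true] p q) :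
    canD p = canD q := by
  unfold canD
  rw [h.1]
  apply List.map_congr_left
  intro i _
  congr 1
  rw [Bool.eq_iff_iff, ← occD_iff, ← occD_iff]
  exact h.2 i

lemma occurs_canD {p : List Bool} (hp : IsBallot p) (i : ℕ) :
    OccursAt [false, true, true] (canD p) i ↔ OccursAt [false, true, true] p i := by
  rw [occD_iff, occD_iff, occD_canD hp]

/-! ### Canonical word for UUD -/

def canUentry (p : List Bool) : ℕ → Bool
  | 0 => true
  | 1 => true
  | (i+2) => !occU p i

def canU (p : List Bool) : List Bool :=
  (List.range p.length).map (canUentry p)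

lemma canU_length (p : List Bool) : (canU p).length = p.length := by simp [canU]

lemma canU_getElem? (p : List Bool) (j : ℕ) :
    (canU p)[j]? = if j < p.length then some (canUentry p j) else none := by
  rcases Nat.lt_or_ge j p.length with h | h
  · rw [if_pos h]
    simp [canU, List.getElem?_map, List.getElem?_range h]
  · rw [if_neg (by omega)]
    exact List.getElem?_eq_none (by simpa [canU] using h)

lemma canU_true_entries {p : List Bool} {i : ℕ} (h : occU p i = true) :
    canUentry p i = true ∧ canUentry p (i+1) = true ∧ canUentry p (i+2) = false := by
  refine ⟨?_, ?_, ?_⟩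
  · match i with
    | 0 => rfl
    | 1 => rfl
    | (k+2) =>
      show (!occU p k) = true
      cases hk : occU p k with
      | false => rfl
      | true =>
        have := (occU_succ hk).2
        rw [h] at this; simp at this
  · match i with
    | 0 => rfl
    | (k+1) =>
      show (!occU p k) = true
      cases hk : occU p k with
      | false => rfl
      | true =>
        have := (occU_succ hk).1
        rw [h] at this; simp at this
  · show (!occU p i) = false
    rw [h]; rfl

lemma occU_canU (p : List Bool) (i : ℕ) : occU (canU p) i = occU p i := by
  cases h : occU p i with
  | true =>
    obtain ⟨h0, h1, h2⟩ := occU_elim h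
    have hi2 : i + 2 < p.length := lt_of_get h2
    obtain ⟨e0, e1, e2⟩ := canU_true_entries h
    have g0 : (canU p)[i]? = some true := by
      rw [canU_getElem?, if_pos (by omega), e0]
    have g1 : (canU p)[i+1]? = some true := by
      rw [canU_getElem?, if_pos (by omega), e1]
    have g2 : (canU p)[i+2]? = some false := by
      rw [canU_getElem?, if_pos (by omega), e2]
    simp [occU, g0, g1, g2]
  | false =>
    cases hc : occU (canU p) i with
    | false => rfl
    | true =>
      obtain ⟨_, _, g2⟩ := occU_elim hc
      rw [canU_getElem?] at g2
      split at g2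
      · simp only [Option.some.injEq] at g2
        have : (!occU p i) = false := g2
        simp at this
        rw [h] at this; simp at this
      · simp at g2

lemma spU_canU (p : List Bool) : SpU (canU p) := by
  intro j hj
  rw [canU_getElem?] at hj
  split at hj
  case isFalse => simp at hj
  case isTrue hlt =>
    simp only [Option.some.injEq] at hj
    match j, hj with
    | (i+2), hj =>
      have hocc : occU p i = true := by
        have : (!occU p i) = false := hj
        simpa using this
      obtain ⟨e0, e1, _⟩ := canU_true_entries hocc
      refine ⟨i, rfl, ?_, ?_⟩
      · rw [canU_getElem?, if_pos (by omega), e0]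
      · rw [canU_getElem?, if_pos (by omega), e1]

lemma canU_eq_self {w : List Bool} (h : SpU w) : canU w = w := by
  apply List.ext_getElem?
  intro j
  rw [canU_getElem?]
  rcases Nat.lt_or_ge j w.length with hj | hj
  · rw [if_pos hj]
    have hw : w[j]? = some w[j] := List.getElem?_eq_getElem hj
    cases hb : w[j] with
    | false =>
      rw [hb] at hw
      obtain ⟨i, rfl, ht0, ht1⟩ := h j hw
      have hocc : occU w i = true := by simp [occU, ht0, ht1, hw]
      have : canUentry w (i+2) = false := by
        show (!occU w i) = false
        rw [hocc]; rfl
      rw [this, hw]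
    | true =>
      rw [hb] at hw
      match j with
      | 0 => rw [hw]; rfl
      | 1 => rw [hw]; rfl
      | (i+2) =>
        have hocc : occU w i = false := by
          cases hc : occU w i with
          | false => rfl
          | true =>
            have := (occU_elim hc).2.2
            rw [hw] at this; simp at this
        have : canUentry w (i+2) = true := by
          show (!occU w i) = true
          rw [hocc]; rfl
        rw [this, hw]
  · rw [if_neg (by omega)]
    exact (List.getElem?_eq_none hj).symm

lemma canU_congr {p q : List Bool} (h : PathEquiv [true, true, false] p q) :
    canU p = canU q := by
  unfold canU
  rw [h.1]
  apply List.map_congr_left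
  intro j _
  match j with
  | 0 => rfl
  | 1 => rfl
  | (i+2) =>
    show (!occU p i) = !occU q i
    congr 1
    rw [Bool.eq_iff_iff, ← occU_iff, ← occU_iff]
    exact h.2 i

lemma occurs_canU (p : List Bool) (i : ℕ) :
    OccursAt [true, true, false] (canU p) i ↔ OccursAt [true, true, false] p i := by
  rw [occU_iff, occU_iff, occU_canU]

/-! ### Reversal: SpD of the reverse is SpU -/

lemma spD_reverse_iff (w : List Bool) : SpD w.reverse ↔ SpU w := by
  constructor
  · intro h j hj
    have hjn : j < w.length := lt_of_get hj
    have h1 : w.reverse[w.length - 1 - j]? = some false := by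
      rw [List.getElem?_reverse (by omega)]
      have : w.length - 1 - (w.length - 1 - j) = j := by omega
      rw [this]; exact hj
    obtain ⟨h2, h3⟩ := h _ h1
    have hb2 : w.length - 1 - j + 1 < w.length := by
      have := lt_of_get h2
      simpa using this
    have hb3 : w.length - 1 - j + 2 < w.length := by
      have := lt_of_get h3
      simpa using this
    have hj2 : 2 ≤ j := by omega
    refine ⟨j - 2, by omega, ?_, ?_⟩
    · rw [List.getElem?_reverse (by omega)] at h3
      have : w.length - 1 - (w.length - 1 - j + 2) = j - 2 := by omega
      rw [this] at h3; exact h3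
    · rw [List.getElem?_reverse (by omega)] at h2
      have : w.length - 1 - (w.length - 1 - j + 1) = j - 2 + 1 := by omega
      rw [this] at h2; exact h2
  · intro h i hi
    have hin : i < w.length := by
      have := lt_of_get hi
      simpa using this
    rw [List.getElem?_reverse (by omega)] at hi
    obtain ⟨k, hk, ht0, ht1⟩ := h _ hi
    have hklt : k + 2 < w.length := by omega
    constructor
    · rw [List.getElem?_reverse (by omega)]
      have : w.length - 1 - (i + 1) = k + 1 := by omega
      rw [this]; exact ht1
    · rw [List.getElem?_reverse (by omega)]
      have : w.length - 1 - (i + 2) = k := by omega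
      rw [this]; exact ht0

/-! ### Main counting lemmas -/

lemma mainD (n : ℕ) :
    numBallotClasses [false, true, true] (n + 1) = (E n).card := by
  classical
  set τ : List Bool := [false, true, true] with hτ
  set S := ballotSetoid τ (n + 1) with hS
  let Φ : Quotient S → List Bool :=
    Quotient.lift (fun p : {p : List Bool // IsBallot p ∧ p.length = n + 1} => canD p.1)
      (fun a b hab => canD_congr hab)
  have hΦ : ∀ p, Φ (Quotient.mk S p) = canD p.1 := fun _ => rfl
  have hinj : Function.Injective Φ := by
    intro x y hxy
    obtain ⟨a, rfl⟩ := Quotient.exists_rep x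
    obtain ⟨b, rfl⟩ := Quotient.exists_rep y
    rw [hΦ, hΦ] at hxy
    apply Quotient.sound
    refine ⟨a.2.2.trans b.2.2.symm, fun i => ?_⟩
    rw [← occurs_canD a.2.1 i, hxy, occurs_canD b.2.1 i]
  have hrange : Set.range Φ = ↑((E n).image (fun w => true :: w)) := by
    ext w
    constructor
    · rintro ⟨q, rfl⟩
      obtain ⟨p, rfl⟩ := Quotient.exists_rep q
      rw [hΦ]
      have hball := p.2.1
      have hlen := p.2.2
      have hsp : SpD (canD p.1) := spD_canD hball
      have hL : (canD p.1).length = n + 1 := by rw [canD_length, hlen]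
      obtain ⟨a, t, hat⟩ : ∃ a t, canD p.1 = a :: t := by
        rcases hc : canD p.1 with _ | ⟨a, t⟩
        · rw [hc] at hL; simp at hL
        · exact ⟨a, t, rfl⟩
      have ha : a = true := by
        have h0 := canD_head hball
        rw [hat] at h0
        cases a with
        | false => simp at h0
        | true => rfl
      subst ha
      rw [hat]
      simp only [Finset.coe_image, Set.mem_image, Finset.mem_coe]
      refine ⟨t, ?_, rfl⟩
      rw [mem_E]
      constructor
      · rw [hat] at hL; simpa using hL
      · rw [hat] at hsp; exact (spD_cons_true t).mp hsp
    · intro hw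
      rw [Finset.mem_coe, Finset.mem_image] at hw
      obtain ⟨v, hv, rfl⟩ := hw
      rw [mem_E] at hv
      have hsp : SpD (true :: v) := (spD_cons_true v).mpr hv.2
      have hlen : (true :: v).length = n + 1 := by simp [hv.1]
      have hball : IsBallot (true :: v) := isBallot_of_spD hsp (by simp)
      exact ⟨Quotient.mk S ⟨true :: v, hball, hlen⟩, canD_eq_self hsp⟩
  have h1 : numBallotClasses τ (n + 1) = Nat.card (Quotient S) := rfl
  rw [h1, ← Nat.card_range_of_injective hinj, hrange,
    Nat.card_coe_set_eq, Set.ncard_coe_finset,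
    Finset.card_image_of_injective _ (fun a b h => by simpa using h)]

lemma mainU (n : ℕ) :
    numBallotClasses [true, true, false] n = (E n).card := by
  classical
  set τ : List Bool := [true, true, false] with hτ
  set S := ballotSetoid τ n with hS
  let Φ : Quotient S → List Bool :=
    Quotient.lift (fun p : {p : List Bool // IsBallot p ∧ p.length = n} => canU p.1)
      (fun a b hab => canU_congr hab)
  have hΦ : ∀ p, Φ (Quotient.mk S p) = canU p.1 := fun _ => rfl
  have hinj : Function.Injective Φ := by
    intro x y hxy
    obtain ⟨a, rfl⟩ := Quotient.exists_rep x
    obtain ⟨b, rfl⟩ := Quotient.exists_rep y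
    rw [hΦ, hΦ] at hxy
    apply Quotient.sound
    refine ⟨a.2.2.trans b.2.2.symm, fun i => ?_⟩
    rw [← occurs_canU a.1 i, hxy, occurs_canU b.1 i]
  have hrange : Set.range Φ = ↑((E n).image List.reverse) := by
    ext w
    constructor
    · rintro ⟨q, rfl⟩
      obtain ⟨p, rfl⟩ := Quotient.exists_rep q
      rw [hΦ]
      simp only [Finset.coe_image, Set.mem_image, Finset.mem_coe]
      refine ⟨(canU p.1).reverse, ?_, by simp⟩
      rw [mem_E]
      constructor
      · rw [List.length_reverse, canU_length, p.2.2]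
      · rw [spD_reverse_iff]
        exact spU_canU p.1
    · intro hw
      rw [Finset.mem_coe, Finset.mem_image] at hw
      obtain ⟨v, hv, rfl⟩ := hw
      rw [mem_E] at hv
      have hsp : SpU v.reverse := by
        rw [← spD_reverse_iff]
        rw [List.reverse_reverse]
        exact hv.2
      have hlen : v.reverse.length = n := by simp [hv.1]
      have hball : IsBallot v.reverse := isBallot_of_spU hsp
      exact ⟨Quotient.mk S ⟨v.reverse, hball, hlen⟩, canU_eq_self hsp⟩
  have h1 : numBallotClasses τ n = Nat.card (Quotient S) := rfl
  rw [h1, ← Nat.card_range_of_injective hinj, hrange,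
    Nat.card_coe_set_eq, Set.ncard_coe_finset,
    Finset.card_image_of_injective _ List.reverse_injective]

end DUUAux

/-- the numbers of DUU-equivalence classes of ballot paths satisfy
`c₁ = c₂ = c₃ = 1`, `c_{n+3} = c_{n+2} + c_n` for `n ≥ 1`, and `c_{n+1} = d_n` for
`n ≥ 3`, where `d_n` counts UUD-equivalence classes. -/
theorem duu_classes_recurrence :
    numBallotClasses [false, true, true] 1 = 1 ∧
    numBallotClasses [false, true, true] 2 = 1 ∧
    numBallotClasses [false, true, true] 3 = 1 ∧
    (∀ n : ℕ, 1 ≤ n → numBallotClasses [false, true, true] (n + 3) =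
      numBallotClasses [false, true, true] (n + 2) +
        numBallotClasses [false, true, true] n) ∧
    (∀ n : ℕ, 3 ≤ n → numBallotClasses [false, true, true] (n + 1) =
      numBallotClasses [true, true, false] n) := by
  refine ⟨?_, ?_, ?_, ?_, ?_⟩
  · rw [show (1 : ℕ) = 0 + 1 from rfl, DUUAux.mainD 0]
    simp [DUUAux.E]
  · rw [show (2 : ℕ) = 1 + 1 from rfl, DUUAux.mainD 1]
    simp [DUUAux.E]
  · rw [show (3 : ℕ) = 2 + 1 from rfl, DUUAux.mainD 2]
    simp [DUUAux.E]
  · intro n hn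
    obtain ⟨m, rfl⟩ : ∃ m, n = m + 1 := ⟨n - 1, by omega⟩
    rw [show m + 1 + 3 = (m + 3) + 1 from rfl, show m + 1 + 2 = (m + 2) + 1 from rfl,
      DUUAux.mainD (m + 3), DUUAux.mainD (m + 2), DUUAux.mainD m]
    exact DUUAux.card_E_rec m
  · intro n _
    rw [DUUAux.mainD n, DUUAux.mainU n]
end

section
/- For every integer n ≥ 1, the number of UDD-equivalence classes of ballot paths of length n equals, as a rational number, ∑_{i=0}^{⌊n/4⌋} ((n − 4i + 1)/(n − 3i + 1)) · C(n − 2i, i), where C(a, b) denotes the binomial coefficient. -/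
open Finset Classical

theorem List.count_take_eq_card {α : Type*} [DecidableEq α] (l : List α) (a : α) (m : ℕ) :
    (l.take m).count a = #{j ∈ Finset.range m | l[j]? = some a} := by
  induction l generalizing m with
  | nil => simp
  | cons b l ih =>
    cases m with
    | zero => simp
    | succ m =>
      rw [List.take_succ_cons, List.count_cons, ih, card_filter, card_filter,
        Finset.sum_range_succ']
      simp only [List.getElem?_cons_succ, List.getElem?_cons_zero, Option.some.injEq, beq_iff_eq]

theorem isBallot_iff_two_mul_count_false_le {p : List Bool} :
    IsBallot p ↔ ∀ k, 2 * (p.take k).count false ≤ (p.take k).length := by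
  refine forall_congr' fun k => ?_
  have := List.count_true_add_count_false (p.take k)
  omega

section Occurrences

variable {τ p q : List Bool} {i : ℕ}

theorem occursAt_iff_getElem? : OccursAt τ p i ↔ ∀ j < τ.length, p[i + j]? = τ[j]? := by
  rw [OccursAt, List.ext_getElem?_iff]
  refine forall_congr' fun j => ?_
  rw [List.getElem?_take, List.getElem?_drop]
  by_cases hj : j < τ.length <;> simp [hj]

theorem occursAt_of_length_le (h : p.length ≤ i) : OccursAt τ p i ↔ τ = [] := by
  simp [OccursAt, List.drop_eq_nil_of_le h, eq_comm]

noncomputable def occSet (τ p : List Bool) : Finset ℕ := {i ∈ range p.length | OccursAt τ p i}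

theorem pathEquiv_iff_occSet_eq :
    PathEquiv τ p q ↔ p.length = q.length ∧ occSet τ p = occSet τ q := by
  refine and_congr_right fun hl => ⟨fun h => ?_, fun h i => ?_⟩
  · ext i
    simp only [occSet, mem_filter, mem_range, hl, h i]
  · by_cases hi : i < p.length
    · have := congrArg (i ∈ ·) h
      simpa only [occSet, mem_filter, mem_range, hi, ← hl, true_and, eq_iff_iff] using this
    · rw [occursAt_of_length_le (not_lt.1 hi), occursAt_of_length_le (hl ▸ not_lt.1 hi)]

theorem numBallotClasses_eq_card_range_occSet (τ : List Bool) (n : ℕ) :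
    numBallotClasses τ n =
      Nat.card (Set.range fun p : {p : List Bool // IsBallot p ∧ p.length = n} =>
        occSet τ p.1) := by
  have : ballotSetoid τ n = Setoid.ker fun p => occSet τ p.1 :=
    Setoid.ext fun p q => pathEquiv_iff_occSet_eq.trans (and_iff_right (p.2.2.trans q.2.2.symm))
  rw [numBallotClasses, this]
  exact Nat.card_congr (Setoid.quotientKerEquivRange _)

end Occurrences

theorem mem_occSet_udd {p : List Bool} {x : ℕ} :
    x ∈ occSet [true, false, false] p ↔
      p[x]? = some true ∧ p[x + 1]? = some false ∧ p[x + 2]? = some false := by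
  rw [occSet, mem_filter, occursAt_iff_getElem?, mem_range]
  constructor
  · rintro ⟨-, h⟩
    exact ⟨h 0 (by simp), h 1 (by simp), h 2 (by simp)⟩
  · rintro ⟨h0, h1, h2⟩
    refine ⟨(List.getElem?_eq_some_iff.1 h0).1, fun j hj => ?_⟩
    simp only [List.length_cons, List.length_nil] at hj
    interval_cases j <;> assumption

def IsAdmissible (n : ℕ) (S : Finset ℕ) : Prop :=
  (∀ x ∈ S, x + 3 ≤ n) ∧ (∀ x ∈ S, ∀ y ∈ S, x < y → x + 3 ≤ y) ∧
    ∀ x ∈ S, 4 * #{y ∈ S | y ≤ x} ≤ x + 3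

def downSet (S : Finset ℕ) : Finset ℕ := S.image (· + 1) ∪ S.image (· + 2)

theorem card_downSet {S : Finset ℕ} (hS : ∀ x ∈ S, x + 1 ∉ S) : #(downSet S) = 2 * #S := by
  have hdisj : Disjoint (S.image (· + 1)) (S.image (· + 2)) := by
    simp only [disjoint_left, mem_image]
    rintro _ ⟨x, hx, rfl⟩ ⟨y, hy, hxy⟩
    obtain rfl : x = y + 1 := by omega
    exact hS y hy hx
  rw [downSet, card_union_of_disjoint hdisj, card_image_of_injective _ (add_left_injective 1),
    card_image_of_injective _ (add_left_injective 2), two_mul]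

theorem two_mul_card_downSet_lt_le {S : Finset ℕ}
    (hS : ∀ x ∈ S, 4 * #{y ∈ S | y ≤ x} ≤ x + 3) (m : ℕ) :
    2 * #{j ∈ downSet S | j < m} ≤ m := by
  set A := {x ∈ S | x + 1 < m}
  set B := {x ∈ S | x + 2 < m}
  have hle : #{j ∈ downSet S | j < m} ≤ #A + #B := by
    calc #{j ∈ downSet S | j < m} ≤ #(A.image (· + 1) ∪ B.image (· + 2)) := by
          refine card_le_card fun j => ?_
          simp only [downSet, A, B, mem_filter, mem_union, mem_image]
          rintro ⟨⟨x, hx, rfl⟩ | ⟨x, hx, rfl⟩, hj⟩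
          exacts [Or.inl ⟨x, ⟨hx, hj⟩, rfl⟩, Or.inr ⟨x, ⟨hx, hj⟩, rfl⟩]
      _ ≤ #A + #B := (card_union_le _ _).trans (add_le_add card_image_le card_image_le)
  rcases A.eq_empty_or_nonempty with hA | hA
  · have hB : B = ∅ := subset_empty.1 <| hA ▸ monotone_filter_right S fun x h => by omega
    rw [hA, hB, card_empty] at hle
    omega
  -- `s` is the last element of `S` with a down-step before `m`; the condition at `s` bounds `#A`
  set s := A.max' hA
  have hsA : s ∈ A := A.max'_mem hA
  have hs : s ∈ S ∧ s + 1 < m := mem_filter.1 hsA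
  have hAs : A = {y ∈ S | y ≤ s} := by
    ext y
    simp only [A, mem_filter]
    exact ⟨fun hy => ⟨hy.1, A.le_max' y (mem_filter.2 hy)⟩, fun hy => ⟨hy.1, by omega⟩⟩
  have hcount := hS s hs.1
  rw [← hAs] at hcount
  by_cases hsm : s + 2 < m
  · have : #B ≤ #A := card_le_card (monotone_filter_right S fun x h => by omega)
    omega
  · have : B ⊆ A.erase s := fun x hx => by
      simp only [B, A, mem_filter, mem_erase] at hx ⊢
      exact ⟨by omega, hx.1, by omega⟩
    have := card_le_card this
    have := card_erase_add_one hsA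
    omega

section Ballot

variable {p : List Bool} {x y : ℕ}

theorem add_three_le_of_mem_occSet_udd (hx : x ∈ occSet [true, false, false] p) :
    x + 3 ≤ p.length :=
  (List.getElem?_eq_some_iff.1 (mem_occSet_udd.1 hx).2.2).1

theorem add_three_le_of_mem_occSet_udd_of_lt (hx : x ∈ occSet [true, false, false] p)
    (hy : y ∈ occSet [true, false, false] p) (hxy : x < y) : x + 3 ≤ y := by
  obtain ⟨-, hx1, hx2⟩ := mem_occSet_udd.1 hx
  have hy0 := (mem_occSet_udd.1 hy).1
  by_contra h
  obtain rfl | rfl : y = x + 1 ∨ y = x + 2 := by omega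
  · simp [hx1] at hy0
  · simp [hx2] at hy0

theorem IsBallot.isAdmissible_occSet_udd (hp : IsBallot p) :
    IsAdmissible p.length (occSet [true, false, false] p) := by
  set S := occSet [true, false, false] p
  refine ⟨fun x hx => add_three_le_of_mem_occSet_udd hx,
    fun x hx y hy => add_three_le_of_mem_occSet_udd_of_lt hx hy, fun x hx => ?_⟩
  set F := {y ∈ S | y ≤ x}
  -- the occurrences up to `x` put `2 * #F` down-steps into the prefix of length `x + 3`
  have hdown : downSet F ⊆ {j ∈ range (x + 3) | p[j]? = some false} := by
    intro j hj
    simp only [downSet, F, mem_union, mem_image, mem_filter] at hj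
    rcases hj with ⟨y, ⟨hy, hyx⟩, rfl⟩ | ⟨y, ⟨hy, hyx⟩, rfl⟩ <;>
      simp only [mem_filter, mem_range, (mem_occSet_udd.1 hy).2, and_true] <;> omega
  have hF : #(downSet F) = 2 * #F := card_downSet fun y hy hy1 => by
    have := add_three_le_of_mem_occSet_udd_of_lt (mem_filter.1 hy).1 (mem_filter.1 hy1).1
    omega
  have := card_le_card hdown
  rw [hF, ← List.count_take_eq_card] at this
  have := isBallot_iff_two_mul_count_false_le.1 hp (x + 3)
  have := List.length_take_le (x + 3) p
  omega

def canonicalPath (n : ℕ) (S : Finset ℕ) : List Bool :=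
  (List.range n).map fun j => decide (j ∉ downSet S)

theorem length_canonicalPath (n : ℕ) (S : Finset ℕ) : (canonicalPath n S).length = n := by
  simp [canonicalPath]

theorem getElem?_canonicalPath_eq_some {n : ℕ} {S : Finset ℕ} {j : ℕ} {b : Bool} :
    (canonicalPath n S)[j]? = some b ↔ j < n ∧ decide (j ∉ downSet S) = b := by
  rw [canonicalPath, List.getElem?_map]
  by_cases h : j < n <;> simp [h]

theorem isBallot_canonicalPath (n : ℕ) {S : Finset ℕ}
    (hS : ∀ x ∈ S, 4 * #{y ∈ S | y ≤ x} ≤ x + 3) : IsBallot (canonicalPath n S) := by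
  refine isBallot_iff_two_mul_count_false_le.2 fun k => ?_
  have hcount : ((canonicalPath n S).take k).count false = #{j ∈ downSet S | j < min k n} := by
    rw [List.count_take_eq_card]
    congr 1
    ext j
    simp only [mem_filter, mem_range, getElem?_canonicalPath_eq_some, lt_min_iff,
      decide_eq_false_iff_not, not_not]
    tauto
  rw [hcount, List.length_take, length_canonicalPath]
  exact two_mul_card_downSet_lt_le hS _

theorem occSet_canonicalPath {n : ℕ} {S : Finset ℕ} (hS : IsAdmissible n S) :
    occSet [true, false, false] (canonicalPath n S) = S := by
  obtain ⟨hlt, hgap, -⟩ := hS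
  ext x
  simp only [mem_occSet_udd, getElem?_canonicalPath_eq_some, decide_eq_true_iff,
    decide_eq_false_iff_not, not_not, downSet, mem_union, mem_image]
  constructor
  · rintro ⟨⟨-, hx⟩, ⟨-, ⟨y, hy, hyx⟩ | ⟨y, hy, hyx⟩⟩, -⟩
    · obtain rfl : y = x := by omega
      exact hy
    · exact absurd (Or.inl ⟨y, hy, by omega⟩) hx
  · intro hx
    have := hlt x hx
    refine ⟨⟨by omega, ?_⟩, ⟨by omega, .inl ⟨x, hx, rfl⟩⟩, ⟨by omega, .inr ⟨x, hx, rfl⟩⟩⟩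
    rintro (⟨y, hy, rfl⟩ | ⟨y, hy, rfl⟩) <;> have := hgap y hy _ hx (by omega) <;> omega

end Ballot

namespace IsAdmissible

variable {n : ℕ} {S : Finset ℕ}

theorem four_mul_card_le (hS : IsAdmissible n S) : 4 * #S ≤ n := by
  rcases S.eq_empty_or_nonempty with rfl | hne
  · simp
  have hmax := hS.2.2 _ (S.max'_mem hne)
  rw [filter_true_of_mem fun y hy => S.le_max' y hy] at hmax
  have := hS.1 _ (S.max'_mem hne)
  omega

theorem mono (hS : IsAdmissible n S) {m : ℕ} (hnm : n ≤ m) : IsAdmissible m S :=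
  ⟨fun x hx => (hS.1 x hx).trans hnm, hS.2⟩

theorem of_add_three_of_notMem (hS : IsAdmissible (n + 3) S) (hn : n ∉ S) :
    IsAdmissible (n + 2) S := by
  refine ⟨fun x hx => ?_, hS.2⟩
  have := hS.1 x hx
  have : x ≠ n := fun h => hn (h ▸ hx)
  omega

theorem notMem (hS : IsAdmissible (n + 2) S) : n ∉ S := fun hn => by
  have := hS.1 n hn
  omega

theorem erase (hS : IsAdmissible (n + 3) S) (hn : n ∈ S) : IsAdmissible n (S.erase n) := by
  obtain ⟨hlt, hgap, hcount⟩ := hS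
  have hbelow : ∀ x ∈ S, x ≠ n → x + 3 ≤ n := fun x hx hxn => by
    have := hlt x hx
    exact hgap x hx n hn (by omega)
  refine ⟨fun x hx => hbelow x (mem_of_mem_erase hx) (ne_of_mem_erase hx),
    fun x hx y hy => hgap x (mem_of_mem_erase hx) y (mem_of_mem_erase hy), fun x hx => ?_⟩
  have := hbelow x (mem_of_mem_erase hx) (ne_of_mem_erase hx)
  rw [filter_erase, erase_eq_of_notMem (by simp; omega)]
  exact hcount x (mem_of_mem_erase hx)

theorem insert (hS : IsAdmissible n S) (hcard : 4 * (#S + 1) ≤ n + 3) :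
    IsAdmissible (n + 3) (insert n S) := by
  obtain ⟨hlt, hgap, hcount⟩ := hS
  have hnS : n ∉ S := fun hn => by have := hlt n hn; omega
  refine ⟨?_, ?_, ?_⟩
  · simp only [mem_insert, forall_eq_or_imp]
    exact ⟨le_rfl, fun x hx => (hlt x hx).trans (by omega)⟩
  · simp only [mem_insert, forall_eq_or_imp]
    refine ⟨⟨by omega, fun y hy _ => ?_⟩, fun x hx => ⟨fun _ => by have := hlt x hx; omega, ?_⟩⟩
    · have := hlt y hy; omega
    · exact hgap x hx
  · simp only [mem_insert, forall_eq_or_imp]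
    refine ⟨?_, fun x hx => ?_⟩
    · rw [filter_true_of_mem fun y hy => by
        rcases mem_insert.1 hy with rfl | hy
        · rfl
        · have := hlt y hy; omega]
      rwa [card_insert_of_notMem hnS]
    · have := hlt x hx
      rw [filter_insert, if_neg (by omega)]
      exact hcount x hx

end IsAdmissible

noncomputable def admissibleSets (n : ℕ) : Finset (Finset ℕ) :=
  {S ∈ (range n).powerset | IsAdmissible n S}

theorem mem_admissibleSets {n : ℕ} {S : Finset ℕ} : S ∈ admissibleSets n ↔ IsAdmissible n S := by
  refine mem_filter.trans ⟨And.right, fun hS => ⟨mem_powerset.2 fun x hx => ?_, hS⟩⟩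
  have := hS.1 x hx
  exact mem_range.2 (by omega)

theorem numBallotClasses_udd_eq_card_admissibleSets (n : ℕ) :
    numBallotClasses [true, false, false] n = #(admissibleSets n) := by
  have : (Set.range fun p : {p : List Bool // IsBallot p ∧ p.length = n} =>
      occSet [true, false, false] p.1) = admissibleSets n := by
    ext S
    simp only [Set.mem_range, mem_coe, mem_admissibleSets]
    constructor
    · rintro ⟨⟨p, hp, rfl⟩, rfl⟩
      exact hp.isAdmissible_occSet_udd
    · intro hS
      exact ⟨⟨canonicalPath n S, isBallot_canonicalPath n hS.2.2, length_canonicalPath n S⟩,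
        occSet_canonicalPath hS⟩
  rw [numBallotClasses_eq_card_range_occSet, this, Nat.card_coe_set_eq, Set.ncard_coe_finset]

noncomputable def admissibleCount (n i : ℕ) : ℕ := #{S ∈ admissibleSets n | #S = i}

theorem card_admissibleSets_eq_sum (n : ℕ) :
    #(admissibleSets n) = ∑ i ∈ range (n / 4 + 1), admissibleCount n i := by
  refine card_eq_sum_card_fiberwise fun S hS => ?_
  have := (mem_admissibleSets.1 hS).four_mul_card_le
  simp only [coe_range, Set.mem_Iio]
  omega

theorem admissibleCount_zero (n : ℕ) : admissibleCount n 0 = 1 := by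
  rw [admissibleCount, card_eq_one]
  refine ⟨∅, eq_singleton_iff_unique_mem.2 ⟨?_, fun S hS => card_eq_zero.1 (mem_filter.1 hS).2⟩⟩
  simp [mem_admissibleSets, IsAdmissible]

theorem admissibleCount_eq_zero {n i : ℕ} (h : n < 4 * i) : admissibleCount n i = 0 := by
  refine card_eq_zero.2 (filter_false_of_mem fun S hS hcard => ?_)
  have := (mem_admissibleSets.1 hS).four_mul_card_le
  omega

theorem admissibleCount_add_three {n i : ℕ} (h : 4 * (i + 1) ≤ n + 3) :
    admissibleCount (n + 3) (i + 1) = admissibleCount (n + 2) (i + 1) + admissibleCount n i := by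
  rw [admissibleCount, ← card_filter_add_card_filter_not (fun S => n ∈ S), add_comm]
  congr 1
  · congr 1
    ext S
    simp only [mem_filter, mem_admissibleSets]
    exact ⟨fun ⟨⟨hS, hc⟩, hn⟩ => ⟨hS.of_add_three_of_notMem hn, hc⟩,
      fun ⟨hS, hc⟩ => ⟨⟨hS.mono (by omega), hc⟩, hS.notMem⟩⟩
  · refine card_nbij' (·.erase n) (insert n) ?_ ?_ ?_ ?_
    · intro S hS
      simp only [coe_filter, mem_filter, mem_admissibleSets, Set.mem_ofPred_eq] at hS ⊢
      exact ⟨hS.1.1.erase hS.2, by rw [card_erase_of_mem hS.2, hS.1.2]; rfl⟩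
    · intro S hS
      simp only [coe_filter, mem_filter, mem_admissibleSets, Set.mem_ofPred_eq] at hS ⊢
      refine ⟨⟨hS.1.insert (by omega), ?_⟩, mem_insert_self n S⟩
      rw [card_insert_of_notMem (hS.1.mono (by omega : n ≤ n + 2)).notMem, hS.2]
    · intro S hS
      exact insert_erase (mem_filter.1 hS).2
    · intro S hS
      exact erase_insert ((mem_admissibleSets.1 (mem_filter.1 hS).1).mono (by omega)).notMem

noncomputable def admissibleCountFormula (n i : ℕ) : ℚ :=
  ((n : ℚ) - 4 * i + 1) / ((n : ℚ) - 3 * i + 1) * ((n - 2 * i).choose i : ℚ)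

theorem admissibleCountFormula_zero (n : ℕ) : admissibleCountFormula n 0 = 1 := by
  simp only [admissibleCountFormula, Nat.cast_zero, mul_zero, sub_zero, Nat.choose_zero_right,
    Nat.cast_one, mul_one]
  exact div_self (by positivity)

theorem admissibleCountFormula_eq_zero (j : ℕ) :
    admissibleCountFormula (4 * j + 3) (j + 1) = 0 := by
  simp only [admissibleCountFormula]
  push_cast
  ring

theorem admissibleCountFormula_add_three {a j : ℕ} (h : 2 * j < a) :
    admissibleCountFormula (a + 2 * j + 3) (j + 1) =
      admissibleCountFormula (a + 2 * j + 2) (j + 1) + admissibleCountFormula (a + 2 * j) j := by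
  simp only [admissibleCountFormula]
  rw [show a + 2 * j + 3 - 2 * (j + 1) = a + 1 by omega,
    show a + 2 * j + 2 - 2 * (j + 1) = a by omega, show a + 2 * j - 2 * j = a by omega,
    Nat.choose_succ_succ']
  have hrel : (a.choose (j + 1) : ℚ) * (j + 1) = a.choose j * (a - j) := by
    rw [← Nat.cast_sub (by omega : j ≤ a)]
    exact_mod_cast Nat.choose_succ_right_eq a j
  have hja : (j : ℚ) + 1 ≤ a := by exact_mod_cast (by omega : j + 1 ≤ a)
  have hA : (a : ℚ) - j ≠ 0 := by linarith
  have hA1 : (a : ℚ) - j + 1 ≠ 0 := by linarith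
  push_cast
  rw [show (a : ℚ) + 2 * j + 3 - 4 * (j + 1) + 1 = a - 2 * j by ring,
    show (a : ℚ) + 2 * j + 3 - 3 * (j + 1) + 1 = a - j + 1 by ring,
    show (a : ℚ) + 2 * j + 2 - 4 * (j + 1) + 1 = a - 2 * j - 1 by ring,
    show (a : ℚ) + 2 * j + 2 - 3 * (j + 1) + 1 = a - j by ring,
    show (a : ℚ) + 2 * j - 4 * j + 1 = a - 2 * j + 1 by ring,
    show (a : ℚ) + 2 * j - 3 * j + 1 = a - j + 1 by ring]
  field_simp
  linear_combination hrel

theorem admissibleCount_eq_formula (n i : ℕ) (h : 4 * i ≤ n + 1) :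
    (admissibleCount n i : ℚ) = admissibleCountFormula n i := by
  induction n using Nat.strong_induction_on generalizing i with
  | _ n ih =>
    rcases i with _ | j
    · rw [admissibleCount_zero, admissibleCountFormula_zero, Nat.cast_one]
    obtain ⟨k, rfl⟩ : ∃ k, n = k + 3 := ⟨n - 3, by omega⟩
    rcases h.eq_or_lt with h | h
    · obtain rfl : k = 4 * j := by omega
      rw [admissibleCount_eq_zero (by omega), admissibleCountFormula_eq_zero, Nat.cast_zero]
    obtain ⟨a, rfl⟩ : ∃ a, k = a + 2 * j := ⟨k - 2 * j, by omega⟩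
    rw [admissibleCount_add_three (by omega), Nat.cast_add, ih _ (by omega) _ (by omega),
      ih _ (by omega) _ (by omega), admissibleCountFormula_add_three (by omega)]

theorem udd_classes_formula_general (n : ℕ) :
    (numBallotClasses [true, false, false] n : ℚ) =
      ∑ i ∈ Finset.range (n / 4 + 1),
        (((n : ℚ) - 4 * i + 1) / ((n : ℚ) - 3 * i + 1)) * ((n - 2 * i).choose i : ℚ) := by
  rw [numBallotClasses_udd_eq_card_admissibleSets, card_admissibleSets_eq_sum, Nat.cast_sum]
  refine sum_congr rfl fun i hi => admissibleCount_eq_formula n i ?_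
  have := mem_range.1 hi
  omega

/-- the number of UDD-equivalence classes of ballot paths of length
`n ≥ 1` equals `∑_{i=0}^{⌊n/4⌋} ((n-4i+1)/(n-3i+1)) · binom(n-2i, i)`. -/
theorem udd_classes_formula (n : ℕ) (hn : 1 ≤ n) :
    (numBallotClasses [true, false, false] n : ℚ) =
      ∑ i ∈ Finset.range (n / 4 + 1),
        (((n : ℚ) - 4 * i + 1) / ((n : ℚ) - 3 * i + 1)) * ((n - 2 * i).choose i : ℚ) :=
  udd_classes_formula_general n
end

section
/- For every integer n ≥ 0, the number of DDU-equivalence classes of ballot paths of length n + 1 equals the number of UDD-equivalence classes of ballot paths of length n. -/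
/-!
A `τ`-class of paths of a given length is determined by the set of positions at which `τ`
occurs. Occurrences of `DDU`, and likewise of `UDD`, lie at least three positions apart. For such
a set `S`, the path whose down-steps are exactly the pairs `s, s + 1` with `s ∈ S` has its
`DDU`s exactly at `S` and its `UDD`s exactly at `S - 1` (as far as the length allows); every
down-step of it is a down-step of the path `S` came from, so it is again a ballot path. A ballot
path never has `DDU` at position `0`, so shifting occurrence sets by one, realized through these
representatives, is a bijection between `DDU`-classes of length `n + 1` and `UDD`-classes of
length `n`.
-/

local notation "DDU" => [false, false, true]
local notation "UDD" => [true, false, false]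

theorem Nat.card_quotient_eq_of_inverse {α β : Type*} {s : Setoid α} {t : Setoid β}
    (f : α → β) (g : β → α) (hf : ∀ ⦃a a'⦄, a ≈ a' → f a ≈ f a')
    (hg : ∀ ⦃b b'⦄, b ≈ b' → g b ≈ g b') (hgf : ∀ a, g (f a) ≈ a) (hfg : ∀ b, f (g b) ≈ b) :
    Nat.card (Quotient s) = Nat.card (Quotient t) :=
  Nat.card_congr
    { toFun := Quotient.map f hf
      invFun := Quotient.map g hg
      left_inv := by rintro ⟨a⟩; exact Quotient.sound (hgf a)
      right_inv := by rintro ⟨b⟩; exact Quotient.sound (hfg b) }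

theorem occursAt_triple_iff {a b c : Bool} {p : List Bool} {i : ℕ} :
    OccursAt [a, b, c] p i ↔ p[i]? = some a ∧ p[i + 1]? = some b ∧ p[i + 2]? = some c := by
  have take_three (l : List Bool) :
      l.take 3 = [a, b, c] ↔ l[0]? = some a ∧ l[1]? = some b ∧ l[2]? = some c := by
    rcases l with _ | ⟨x, _ | ⟨y, _ | ⟨z, l⟩⟩⟩ <;> simp
  simp [OccursAt, take_three, List.getElem?_drop]

theorem OccursAt.add_length_le {τ p : List Bool} {i : ℕ} (hτ : τ ≠ []) (h : OccursAt τ p i) :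
    i + τ.length ≤ p.length := by
  have := congrArg List.length h
  simp only [List.length_take, List.length_drop] at this
  have := List.length_pos_iff.2 hτ
  omega

theorem count_false_take_le_of_getElem? {p q : List Bool}
    (h : ∀ j : ℕ, q[j]? = some false → p[j]? = some false) (k : ℕ) :
    (q.take k).count false ≤ (p.take k).count false := by
  induction k with
  | zero => simp
  | succ k ih =>
    have hk : q[k]?.toList.count false ≤ p[k]?.toList.count false := by
      rcases hq : q[k]? with _ | _ | _
      · simp
      · simp [h k hq]
      · simp
    simp only [List.take_add_one, List.count_append]
    omega

theorem IsBallot.of_getElem?_eq_false {p q : List Bool} (hp : IsBallot p)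
    (h : ∀ j : ℕ, q[j]? = some false → p[j]? = some false) : IsBallot q := by
  intro k
  rw [List.take_eq_take_min]
  have hF := count_false_take_le_of_getElem? h (min k q.length)
  have hpk := hp (min k q.length)
  have hp_len := List.count_false_add_count_true (p.take (min k q.length))
  have hq_len := List.count_false_add_count_true (q.take (min k q.length))
  simp only [List.length_take] at hp_len hq_len
  omega

theorem IsBallot.getElem?_zero_ne_false {p : List Bool} (hp : IsBallot p) :
    p[0]? ≠ some false := by
  intro h
  have := hp 1
  rw [List.take_one, List.head?_eq_getElem?, h] at this
  simp at this

theorem not_occursAt_ddu_zero {p : List Bool} (hp : IsBallot p) : ¬ OccursAt DDU p 0 :=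
  fun h => hp.getElem?_zero_ne_false (occursAt_triple_iff.1 h).1

theorem OccursAt.ddu_separated {p : List Bool} {i : ℕ} (h : OccursAt DDU p i) :
    ¬ OccursAt DDU p (i + 1) ∧ ¬ OccursAt DDU p (i + 2) := by
  simp_all [occursAt_triple_iff]

theorem OccursAt.udd_separated {p : List Bool} {i : ℕ} (h : OccursAt UDD p i) :
    ¬ OccursAt UDD p (i + 1) ∧ ¬ OccursAt UDD p (i + 2) := by
  simp_all [occursAt_triple_iff]

open Classical in
noncomputable def downPairsPath (m : ℕ) (S : Set ℕ) : List Bool :=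
  List.ofFn fun j : Fin m => decide ((j : ℕ) ∉ S ∧ ∀ s ∈ S, (j : ℕ) ≠ s + 1)

@[simp] theorem length_downPairsPath (m : ℕ) (S : Set ℕ) :
    (downPairsPath m S).length = m := by
  simp [downPairsPath]

theorem downPairsPath_getElem?_eq_false {m : ℕ} {S : Set ℕ} {j : ℕ} :
    (downPairsPath m S)[j]? = some false ↔ j < m ∧ (j ∈ S ∨ ∃ s ∈ S, j = s + 1) := by
  simp [downPairsPath, List.getElem?_ofFn, or_iff_not_imp_left]

theorem downPairsPath_getElem?_eq_true {m : ℕ} {S : Set ℕ} {j : ℕ} :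
    (downPairsPath m S)[j]? = some true ↔ j < m ∧ j ∉ S ∧ ∀ s ∈ S, j ≠ s + 1 := by
  simp [downPairsPath, List.getElem?_ofFn, and_left_comm]

theorem occursAt_udd_downPairsPath {m : ℕ} {S : Set ℕ} (hS : ∀ s ∈ S, s + 1 ∉ S ∧ s + 2 ∉ S)
    {t : ℕ} :
    OccursAt UDD (downPairsPath m S) t ↔ t + 1 ∈ S ∧ t + 2 < m := by
  simp only [occursAt_triple_iff, downPairsPath_getElem?_eq_false, downPairsPath_getElem?_eq_true]
  grind

theorem occursAt_ddu_downPairsPath {m : ℕ} {S : Set ℕ} (hS : ∀ s ∈ S, s + 1 ∉ S ∧ s + 2 ∉ S)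
    {t : ℕ} :
    OccursAt DDU (downPairsPath m S) t ↔ t ∈ S ∧ t + 2 < m := by
  simp only [occursAt_triple_iff, downPairsPath_getElem?_eq_false, downPairsPath_getElem?_eq_true]
  grind

theorem IsBallot.downPairsPath {p : List Bool} (hp : IsBallot p) (m : ℕ) {S : Set ℕ}
    (hS : ∀ s ∈ S, p[s]? = some false ∧ p[s + 1]? = some false) :
    IsBallot (downPairsPath m S) := by
  refine hp.of_getElem?_eq_false fun j hj => ?_
  obtain ⟨-, hj | ⟨s, hs, rfl⟩⟩ := downPairsPath_getElem?_eq_false.1 hj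
  exacts [(hS j hj).1, (hS s hs).2]

noncomputable def uddOfDDU (p : List Bool) : List Bool :=
  downPairsPath (p.length - 1) {i | OccursAt DDU p i}

noncomputable def dduOfUDD (q : List Bool) : List Bool :=
  downPairsPath (q.length + 1) ((· + 1) '' {i | OccursAt UDD q i})

theorem occursAt_udd_uddOfDDU {p : List Bool} {t : ℕ} :
    OccursAt UDD (uddOfDDU p) t ↔ OccursAt DDU p (t + 1) := by
  rw [uddOfDDU, occursAt_udd_downPairsPath]
  · simp only [Set.mem_ofPred_eq, and_iff_left_iff_imp]
    intro h
    have := h.add_length_le (List.cons_ne_nil _ _)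
    simp only [List.length_cons, List.length_nil] at this
    omega
  · exact fun _ hs => OccursAt.ddu_separated hs

theorem occursAt_ddu_dduOfUDD_succ {q : List Bool} {t : ℕ} :
    OccursAt DDU (dduOfUDD q) (t + 1) ↔ OccursAt UDD q t := by
  rw [dduOfUDD, occursAt_ddu_downPairsPath]
  · simp only [(add_left_injective 1).mem_set_image, Set.mem_ofPred_eq,
      and_iff_left_iff_imp]
    intro h
    have := h.add_length_le (List.cons_ne_nil _ _)
    simp only [List.length_cons, List.length_nil] at this
    omega
  · rintro _ ⟨s, hs, rfl⟩
    simp only [(add_left_injective 1).mem_set_image, Set.mem_ofPred_eq]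
    exact hs.udd_separated

theorem IsBallot.uddOfDDU {p : List Bool} (hp : IsBallot p) : IsBallot (uddOfDDU p) :=
  hp.downPairsPath _ fun _ hs => ⟨(occursAt_triple_iff.1 hs).1, (occursAt_triple_iff.1 hs).2.1⟩

theorem IsBallot.dduOfUDD {q : List Bool} (hq : IsBallot q) : IsBallot (dduOfUDD q) :=
  hq.downPairsPath _ fun _ ⟨_, hs, hi⟩ => hi ▸ (occursAt_triple_iff.1 hs).2

theorem pathEquiv_ddu_of_isBallot {p q : List Bool} (hp : IsBallot p) (hq : IsBallot q)
    (hlen : p.length = q.length) (h : ∀ t, OccursAt DDU p (t + 1) ↔ OccursAt DDU q (t + 1)) :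
    PathEquiv DDU p q := by
  refine ⟨hlen, fun i => ?_⟩
  cases i with
  | zero => exact iff_of_false (not_occursAt_ddu_zero hp) (not_occursAt_ddu_zero hq)
  | succ t => exact h t

theorem PathEquiv.uddOfDDU {p p' : List Bool} (h : PathEquiv DDU p p') :
    PathEquiv UDD (uddOfDDU p) (uddOfDDU p') :=
  ⟨by simp [_root_.uddOfDDU, h.1], fun t => by simp only [occursAt_udd_uddOfDDU, h.2]⟩

theorem PathEquiv.dduOfUDD {q q' : List Bool} (hq : IsBallot q) (hq' : IsBallot q')
    (h : PathEquiv UDD q q') : PathEquiv DDU (dduOfUDD q) (dduOfUDD q') :=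
  pathEquiv_ddu_of_isBallot hq.dduOfUDD hq'.dduOfUDD (by simp [_root_.dduOfUDD, h.1])
    fun t => by simp only [occursAt_ddu_dduOfUDD_succ, h.2]

theorem pathEquiv_uddOfDDU_dduOfUDD (q : List Bool) :
    PathEquiv UDD (uddOfDDU (dduOfUDD q)) q :=
  ⟨by simp [uddOfDDU, dduOfUDD], fun t => by
    rw [occursAt_udd_uddOfDDU, occursAt_ddu_dduOfUDD_succ]⟩

theorem pathEquiv_dduOfUDD_uddOfDDU {p : List Bool} (hp : IsBallot p) (hp0 : 0 < p.length) :
    PathEquiv DDU (dduOfUDD (uddOfDDU p)) p :=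
  pathEquiv_ddu_of_isBallot hp.uddOfDDU.dduOfUDD hp
    (by simp only [uddOfDDU, dduOfUDD, length_downPairsPath]; omega) fun t => by
    rw [occursAt_ddu_dduOfUDD_succ, occursAt_udd_uddOfDDU]

/-- the number of DDU-equivalence classes of ballot paths of length
`n + 1` equals the number of UDD-equivalence classes of ballot paths of length `n`. -/
theorem ddu_udd_classes_shift (n : ℕ) :
    numBallotClasses [false, false, true] (n + 1) =
      numBallotClasses [true, false, false] n :=
  Nat.card_quotient_eq_of_inverse
    (fun p => ⟨uddOfDDU p.1, p.2.1.uddOfDDU, by simp [uddOfDDU, p.2.2]⟩)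
    (fun q => ⟨dduOfUDD q.1, q.2.1.dduOfUDD, by simp [dduOfUDD, q.2.2]⟩)
    (fun _ _ h => PathEquiv.uddOfDDU h)
    (fun q q' h => PathEquiv.dduOfUDD q.2.1 q'.2.1 h)
    (fun p => pathEquiv_dduOfUDD_uddOfDDU p.2.1 (by rw [p.2.2]; exact n.succ_pos))
    (fun q => pathEquiv_uddOfDDU_dduOfUDD q.1)
end
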